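/- arXiv:2207.06589 — 6 statements merged into one kernel-verified Lean document; each statement's English description precedes it below -/
import Mathlib

section
/- Let H be a finite-dimensional complex inner product space and let P and Q be orthogonal projections on H (self-adjoint idempotent linear endomorphisms). Then there exists a finite family of pairwise-orthogonal subspaces (S_i) of H whose internal direct sum is all of H such that each S_i has dimension at most 2, each S_i is invariant under both P and Q, and for every S_i of dimension 2 the restrictions of P and of Q to S_i are each rank-one orthogonal projections of S_i. -/
open scoped InnerProductSpace

/-- `R` is an orthogonal projection: idempotent and self-adjoint (with respect to the
inner product of `H`). -/
def IsOrthogonalProjection {H : Type*} [NormedAddCommGroup H] [InnerProductSpace ℂ H]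
    (R : H →ₗ[ℂ] H) : Prop :=
  R ∘ₗ R = R ∧ ∀ x y : H, ⟪R x, y⟫_ℂ = ⟪x, R y⟫_ℂ

/-!
Since `P` and `Q` are self-adjoint, the orthogonal complement of a subspace invariant under both is
again invariant, so it suffices to split off one nonzero invariant block of dimension at most two
and recurse. If `P = 0`, an eigenvector of `Q` spans such a block. Otherwise `P Q` preserves
`range P` and, `ℂ` being algebraically closed, has an eigenvector `v` there: then `P v = v` and
`P (Q v) = μ v`, so `span {v, Q v}` is invariant, and on it `P` and `Q` have images `ℂ ∙ v` and
`ℂ ∙ Q v`.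
-/

open Module Submodule

section Block

variable {K V : Type*} [Field K] [AddCommGroup V] [Module K V]

theorem LinearMap.finrank_range_restrict (f : Module.End K V) {W : Submodule K V}
    (hW : ∀ x ∈ W, f x ∈ W) : finrank K (range (f.restrict hW)) = finrank K (W.map f) := by
  rw [range_restrict, (comapSubtypeEquivOfLe (map_le_iff_le_comap.2 hW)).finrank_eq]

theorem IsIdempotentElem.restrict {f : Module.End K V} (hf : IsIdempotentElem f)
    {W : Submodule K V} (hW : ∀ x ∈ W, f x ∈ W) : IsIdempotentElem (f.restrict hW) :=
  LinearMap.ext fun x => Subtype.ext (LinearMap.congr_fun hf x)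

structure IsJordanBlock (P Q : Module.End K V) (S : Submodule K V) : Prop where
  mapsTo_left : ∀ x ∈ S, P x ∈ S
  mapsTo_right : ∀ x ∈ S, Q x ∈ S
  finrank_le_two : finrank K S ≤ 2
  finrank_map_eq_one : finrank K S = 2 → finrank K (S.map P) = 1 ∧ finrank K (S.map Q) = 1

theorem finrank_span_singleton_le_one {v : V} : finrank K (K ∙ v) ≤ 1 := by
  simpa using finrank_span_le_card (R := K) ({v} : Set V)

variable {P Q : Module.End K V}

theorem isJordanBlock_span_singleton {v : V} (hPv : P v ∈ K ∙ v) (hQv : Q v ∈ K ∙ v) :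
    IsJordanBlock P Q (K ∙ v) where
  mapsTo_left x hx := by
    obtain ⟨c, rfl⟩ := mem_span_singleton.1 hx
    simpa using smul_mem _ c hPv
  mapsTo_right x hx := by
    obtain ⟨c, rfl⟩ := mem_span_singleton.1 hx
    simpa using smul_mem _ c hQv
  finrank_le_two := finrank_span_singleton_le_one.trans (by norm_num)
  finrank_map_eq_one h := by
    have := finrank_span_singleton_le_one (K := K) (v := v)
    omega

theorem isJordanBlock_span_pair (hQ : IsIdempotentElem Q) {v : V} {μ : K} (hv : v ≠ 0)
    (hPv : P v = v) (hPQv : P (Q v) = μ • v) : IsJordanBlock P Q (span K {v, Q v}) := by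
  have hQQv : Q (Q v) = Q v := LinearMap.congr_fun hQ v
  have hmapP : (span K {v, Q v}).map P = K ∙ v := by
    rw [map_span, Set.image_pair, hPv, hPQv, span_insert, sup_eq_left]
    exact span_singleton_smul_le (R := K) μ v
  have hmapQ : (span K {v, Q v}).map Q = K ∙ Q v := by
    rw [map_span, Set.image_pair, hQQv, Set.pair_eq_singleton]
  have hle : ∀ w ∈ ({v, Q v} : Set V), K ∙ w ≤ span K {v, Q v} := fun w hw =>
    span_mono (Set.singleton_subset_iff.2 hw)
  refine ⟨fun x hx => ?_, fun x hx => ?_, ?_, fun h2 => ⟨?_, ?_⟩⟩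
  · exact hle v (by simp) (hmapP ▸ mem_map_of_mem hx)
  · exact hle (Q v) (by simp) (hmapQ ▸ mem_map_of_mem hx)
  · classical
    exact (finrank_span_le_card _).trans (by simpa using Finset.card_le_two)
  · rw [hmapP, finrank_span_singleton hv]
  · have hQv : Q v ≠ 0 := by
      rintro hQv
      rw [hQv, Set.pair_comm, span_insert_zero, finrank_span_singleton hv] at h2
      omega
    rw [hmapQ, finrank_span_singleton hQv]

theorem exists_isJordanBlock [IsAlgClosed K] [FiniteDimensional K V] [Nontrivial V]
    (hP : IsIdempotentElem P) (hQ : IsIdempotentElem Q) :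
    ∃ S : Submodule K V, S ≠ ⊥ ∧ IsJordanBlock P Q S := by
  by_cases hP0 : P = 0
  · obtain ⟨μ, hμ⟩ := Q.exists_eigenvalue
    obtain ⟨v, hv⟩ := hμ.exists_hasEigenvector
    refine ⟨K ∙ v, span_singleton_eq_bot.not.2 hv.2, isJordanBlock_span_singleton ?_ ?_⟩
    · simp [hP0]
    · rw [hv.apply_eq_smul]
      exact smul_mem _ μ (mem_span_singleton_self v)
  · have : Nontrivial (LinearMap.range P) :=
      nontrivial_iff_ne_bot.2 (LinearMap.range_eq_bot.not.2 hP0)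
    have hPQ : ∀ x ∈ LinearMap.range P, (P * Q) x ∈ LinearMap.range P := fun x _ =>
      LinearMap.mem_range_self P (Q x)
    obtain ⟨μ, hμ⟩ := Module.End.exists_eigenvalue ((P * Q).restrict hPQ)
    obtain ⟨w, hw⟩ := hμ.exists_hasEigenvector
    have hw0 : (w : V) ≠ 0 := fun h => hw.2 (Subtype.ext h)
    have hPw : P w = w := (LinearMap.IsIdempotentElem.mem_range_iff hP).1 w.2
    refine ⟨span K {(w : V), Q w}, fun h => hw0 ((span_eq_bot.1 h) w (by simp)),
      isJordanBlock_span_pair hQ hw0 hPw (congrArg Subtype.val hw.apply_eq_smul)⟩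

theorem IsJordanBlock.map_subtype {W : Submodule K V} (hWP : ∀ x ∈ W, P x ∈ W)
    (hWQ : ∀ x ∈ W, Q x ∈ W) {S : Submodule K W}
    (hS : IsJordanBlock (P.restrict hWP) (Q.restrict hWQ) S) :
    IsJordanBlock P Q (S.map W.subtype) := by
  have hmap : ∀ (f : Module.End K V) (hWf : ∀ x ∈ W, f x ∈ W),
      (S.map W.subtype).map f = (S.map (f.restrict hWf)).map W.subtype := fun f hWf => by
    rw [← map_comp, ← map_comp, LinearMap.subtype_comp_restrict]
    rfl
  have hmapsTo : ∀ (f : Module.End K V) (hWf : ∀ x ∈ W, f x ∈ W),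
      (∀ x ∈ S, f.restrict hWf x ∈ S) → ∀ x ∈ S.map W.subtype, f x ∈ S.map W.subtype := by
    rintro f hWf hSf _ ⟨x, hx, rfl⟩
    exact ⟨_, hSf x hx, rfl⟩
  refine ⟨hmapsTo P hWP hS.mapsTo_left, hmapsTo Q hWQ hS.mapsTo_right, ?_, fun h2 => ?_⟩
  · rw [finrank_map_subtype_eq]
    exact hS.finrank_le_two
  · rw [finrank_map_subtype_eq] at h2
    rw [hmap P hWP, hmap Q hWQ, finrank_map_subtype_eq, finrank_map_subtype_eq]
    exact hS.finrank_map_eq_one h2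

theorem exists_isJordanBlock_le [IsAlgClosed K] [FiniteDimensional K V]
    (hP : IsIdempotentElem P) (hQ : IsIdempotentElem Q) {W : Submodule K V} (hW : W ≠ ⊥)
    (hWP : ∀ x ∈ W, P x ∈ W) (hWQ : ∀ x ∈ W, Q x ∈ W) :
    ∃ S ≤ W, S ≠ ⊥ ∧ IsJordanBlock P Q S := by
  have : Nontrivial W := nontrivial_iff_ne_bot.2 hW
  obtain ⟨S, hS0, hS⟩ := exists_isJordanBlock (hP.restrict hWP) (hQ.restrict hWQ)
  refine ⟨S.map W.subtype, map_subtype_le W S, ?_, hS.map_subtype hWP hWQ⟩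
  simpa using (map_injective_of_injective W.injective_subtype).ne hS0

end Block

section Orthogonal

variable {H : Type*} [NormedAddCommGroup H] [InnerProductSpace ℂ H] {P Q : H →ₗ[ℂ] H}

theorem IsOrthogonalProjection.restrict (hP : IsOrthogonalProjection P) {W : Submodule ℂ H}
    (hW : ∀ x ∈ W, P x ∈ W) : IsOrthogonalProjection (P.restrict hW) :=
  ⟨IsIdempotentElem.restrict hP.1 hW, fun x y => hP.2 x y⟩

theorem IsOrthogonalProjection.mapsTo_orthogonal (hP : IsOrthogonalProjection P)
    {W : Submodule ℂ H} (hW : ∀ x ∈ W, P x ∈ W) : ∀ x ∈ Wᗮ, P x ∈ Wᗮ := fun x hx =>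
  (mem_orthogonal W _).2 fun u hu => by
    rw [← hP.2]
    exact hx _ (hW u hu)

structure IsJordanDecomposition (P Q : H →ₗ[ℂ] H) (W : Submodule ℂ H) {n : ℕ}
    (S : Fin n → Submodule ℂ H) : Prop where
  isJordanBlock : ∀ i, IsJordanBlock P Q (S i)
  pairwise_isOrtho : Pairwise fun i j => S i ⟂ S j
  iSup_eq : ⨆ i, S i = W

theorem isJordanDecomposition_bot : IsJordanDecomposition P Q ⊥ (Fin.elim0 : Fin 0 → _) :=
  ⟨fun i => i.elim0, fun i => i.elim0, iSup_of_empty _⟩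

theorem IsJordanDecomposition.cons {W S₀ : Submodule ℂ H} [S₀.HasOrthogonalProjection] {n : ℕ}
    {S : Fin n → Submodule ℂ H} (hS : IsJordanDecomposition P Q (S₀ᗮ ⊓ W) S)
    (hS₀ : IsJordanBlock P Q S₀) (hS₀W : S₀ ≤ W) :
    IsJordanDecomposition P Q W (Fin.cons S₀ S) where
  isJordanBlock := Fin.cases hS₀ hS.isJordanBlock
  pairwise_isOrtho := by
    refine pairwise_fin_succ_iff_of_isSymm.2 ⟨fun j => ?_, hS.pairwise_isOrtho⟩
    have hSj : S j ≤ S₀ᗮ := (le_iSup S j).trans (hS.iSup_eq ▸ inf_le_left)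
    exact (isOrtho_orthogonal_right S₀).mono_right hSj
  iSup_eq := by
    rw [← (finSuccEquiv n).symm.iSup_comp, iSup_option]
    simpa [hS.iSup_eq] using sup_orthogonal_inf_of_hasOrthogonalProjection hS₀W

theorem IsJordanDecomposition.isInternal {n : ℕ} {S : Fin n → Submodule ℂ H}
    (hS : IsJordanDecomposition P Q ⊤ S) : DirectSum.IsInternal S :=
  DirectSum.isInternal_submodule_of_iSupIndep_of_iSup_eq_top
    (orthogonalFamily_iff_pairwise.2 hS.pairwise_isOrtho).independent hS.iSup_eq

theorem exists_isJordanDecomposition [FiniteDimensional ℂ H] (hP : IsOrthogonalProjection P)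
    (hQ : IsOrthogonalProjection Q) (W : Submodule ℂ H) (hWP : ∀ x ∈ W, P x ∈ W)
    (hWQ : ∀ x ∈ W, Q x ∈ W) :
    ∃ (n : ℕ) (S : Fin n → Submodule ℂ H), IsJordanDecomposition P Q W S := by
  induction hd : finrank ℂ W using Nat.strong_induction_on generalizing W with
  | _ d ih =>
  rcases eq_or_ne W ⊥ with rfl | hW
  · exact ⟨0, _, isJordanDecomposition_bot⟩
  obtain ⟨S₀, hS₀W, hS₀, hblock⟩ := exists_isJordanBlock_le hP.1 hQ.1 hW hWP hWQ
  have hlt : finrank ℂ (S₀ᗮ ⊓ W : Submodule ℂ H) < d := by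
    have := finrank_add_inf_finrank_orthogonal hS₀W
    have := Submodule.finrank_eq_zero.not.2 hS₀
    omega
  obtain ⟨n, S, hS⟩ := ih _ hlt (S₀ᗮ ⊓ W)
    (fun x hx => ⟨hP.mapsTo_orthogonal hblock.mapsTo_left x hx.1, hWP x hx.2⟩)
    (fun x hx => ⟨hQ.mapsTo_orthogonal hblock.mapsTo_right x hx.1, hWQ x hx.2⟩) rfl
  exact ⟨n + 1, _, hS.cons hblock hS₀W⟩

end Orthogonal

/-- **Jordan's lemma for two projections.** Any two orthogonal projections `P`, `Q` on a
finite-dimensional complex inner product space admit a simultaneous orthogonal decomposition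
of the space into invariant subspaces of dimension at most 2; on each two-dimensional block the
restrictions of `P` and `Q` are rank-one orthogonal projections. -/
theorem jordan_lemma_two_projections
    {H : Type*} [NormedAddCommGroup H] [InnerProductSpace ℂ H] [FiniteDimensional ℂ H]
    (P Q : H →ₗ[ℂ] H)
    (hP : IsOrthogonalProjection P) (hQ : IsOrthogonalProjection Q) :
    ∃ (ι : Type) (_ : Fintype ι) (_ : DecidableEq ι) (S : ι → Submodule ℂ H)
      (hPinv : ∀ i, ∀ x ∈ S i, P x ∈ S i) (hQinv : ∀ i, ∀ x ∈ S i, Q x ∈ S i),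
      (∀ i j, i ≠ j → ∀ x ∈ S i, ∀ y ∈ S j, ⟪x, y⟫_ℂ = 0) ∧
      DirectSum.IsInternal S ∧
      (∀ i, Module.finrank ℂ (S i) ≤ 2) ∧
      (∀ i, Module.finrank ℂ (S i) = 2 →
        IsOrthogonalProjection (P.restrict (hPinv i)) ∧
        Module.finrank ℂ (LinearMap.range (P.restrict (hPinv i))) = 1 ∧
        IsOrthogonalProjection (Q.restrict (hQinv i)) ∧
        Module.finrank ℂ (LinearMap.range (Q.restrict (hQinv i))) = 1) := by
  obtain ⟨n, S, hS⟩ :=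
    exists_isJordanDecomposition hP hQ ⊤ (fun _ _ => mem_top) (fun _ _ => mem_top)
  refine ⟨Fin n, inferInstance, inferInstance, S, fun i => (hS.isJordanBlock i).mapsTo_left,
    fun i => (hS.isJordanBlock i).mapsTo_right,
    fun i j hij => isOrtho_iff_inner_eq.1 (hS.pairwise_isOrtho hij), hS.isInternal,
    fun i => (hS.isJordanBlock i).finrank_le_two, fun i hi => ?_⟩
  obtain ⟨hPi, hQi⟩ := (hS.isJordanBlock i).finrank_map_eq_one hi
  exact ⟨hP.restrict _, (LinearMap.finrank_range_restrict P _).trans hPi,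
    hQ.restrict _, (LinearMap.finrank_range_restrict Q _).trans hQi⟩
end

section
/- Let H be a finite-dimensional complex inner product space, let P and Q be orthogonal projections on H, and let w ∈ [0,1]. Suppose φ₀ and φ₁ are eigenvectors of wP + (1−w)Q with respective eigenvalues λ₀ and λ₁. If λ₀ + λ₁ ≠ 1 and λ₀ ≠ λ₁, then ⟨φ₀, P φ₁⟩ = 0 and ⟨φ₀, Q φ₁⟩ = 0. -/
/-! Since `A = w P + (1 - w) Q` is self-adjoint, `φ₀ ⊥ φ₁`, and pairing `A φ₁ = λ₁ φ₁` with `φ₀`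
gives `w a + (1 - w) b = 0` for `a = ⟪φ₀, P φ₁⟫`, `b = ⟪φ₀, Q φ₁⟫`. For idempotents `P, Q` one has
`w P A - (1 - w) A Q = w² P - (1 - w)² Q`; between `φ₀` and `φ₁` this reads
`w λ₁ a - (1 - w) λ₀ b = w² a - (1 - w)² b`, and with the first relation `w (λ₀ + λ₁ - 1) a = 0`.
For `w ∈ {0, 1}` the operator `A` is a projection, whose distinct eigenvalues `0, 1` sum to `1`;
otherwise `a = 0`, and then `b = 0`. -/

open scoped InnerProductSpace

open Module End

theorem IsOrthogonalProjection.isIdempotentElem {H : Type*} [NormedAddCommGroup H]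
    [InnerProductSpace ℂ H] {R : H →ₗ[ℂ] H} (hR : IsOrthogonalProjection R) :
    IsIdempotentElem R :=
  hR.1

theorem IsOrthogonalProjection.isSymmetric {H : Type*} [NormedAddCommGroup H]
    [InnerProductSpace ℂ H] {R : H →ₗ[ℂ] H} (hR : IsOrthogonalProjection R) : R.IsSymmetric :=
  hR.2

theorem IsIdempotentElem.add_eq_one_of_hasEigenvalue {K M : Type*} [Field K] [AddCommGroup M]
    [Module K M] {f : End K M} (hf : IsIdempotentElem f) {μ ν : K} (hμ : f.HasEigenvalue μ)
    (hν : f.HasEigenvalue ν) (hne : μ ≠ ν) : μ + ν = 1 := by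
  rcases hf.spectrum_subset K hμ.mem_spectrum with rfl | rfl <;>
    rcases hf.spectrum_subset K hν.mem_spectrum with rfl | rfl <;> simp_all

theorem IsIdempotentElem.smul_mul_add_sub_add_mul {S R : Type*} [CommRing S] [Ring R]
    [Algebra S R] {p q : R} (hp : IsIdempotentElem p) (hq : IsIdempotentElem q) (w v : S) :
    w • (p * (w • p + v • q)) - v • ((w • p + v • q) * q) = w ^ 2 • p - v ^ 2 • q := by
  simp only [mul_add, add_mul, mul_smul_comm, smul_mul_assoc, hp.eq, hq.eq, smul_add, smul_smul]
  module

section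

variable {𝕜 E : Type*} [RCLike 𝕜] [NormedAddCommGroup E] [InnerProductSpace 𝕜 E]

theorem LinearMap.IsSymmetric.inner_eq_zero_of_hasEigenvector {T : E →ₗ[𝕜] E}
    (hT : T.IsSymmetric) {μ ν : 𝕜} {x y : E} (hx : HasEigenvector T μ x)
    (hy : HasEigenvector T ν y) (hne : μ ≠ ν) : ⟪x, y⟫_𝕜 = 0 :=
  hT.orthogonalFamily_eigenspaces hne ⟨x, hx.1⟩ ⟨y, hy.1⟩

theorem inner_apply_eq_zero_of_hasEigenvector_smul_add_smul {P Q : E →ₗ[𝕜] E}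
    (hP : IsIdempotentElem P) (hQ : IsIdempotentElem Q) {w v : 𝕜} (hw : w ≠ 0) (hv : v ≠ 0)
    (hwv : w + v = 1) (hA : (w • P + v • Q).IsSymmetric) {μ ν : 𝕜} {x y : E}
    (hx : HasEigenvector (w • P + v • Q) μ x) (hy : HasEigenvector (w • P + v • Q) ν y)
    (hsum : μ + ν ≠ 1) (hne : μ ≠ ν) :
    ⟪x, P y⟫_𝕜 = 0 ∧ ⟪x, Q y⟫_𝕜 = 0 := by
  set A := w • P + v • Q
  have hAx : A x = μ • x := mem_eigenspace_iff.mp hx.1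
  have hAy : A y = ν • y := mem_eigenspace_iff.mp hy.1
  have hμ : starRingEnd 𝕜 μ = μ := hA.conj_eigenvalue_eq_self (hasEigenvalue_of_hasEigenvector hx)
  have horth : ⟪x, y⟫_𝕜 = 0 := hA.inner_eq_zero_of_hasEigenvector hx hy hne
  have hcomb : w * ⟪x, P y⟫_𝕜 + v * ⟪x, Q y⟫_𝕜 = 0 := by
    have hxAy : ⟪x, A y⟫_𝕜 = 0 := by rw [hAy, inner_smul_right, horth, mul_zero]
    simpa [A, inner_add_right, inner_smul_right] using hxAy
  have hkey := congrArg (⟪x, ·⟫_𝕜) (LinearMap.congr_fun (hP.smul_mul_add_sub_add_mul hQ w v) y)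
  simp only [LinearMap.sub_apply, LinearMap.smul_apply, Module.End.mul_apply, inner_sub_right,
    inner_smul_right] at hkey
  rw [← hA x, hAx, hAy, inner_smul_left, hμ, map_smul, inner_smul_right] at hkey
  have hwa : w * (μ + ν - 1) * ⟪x, P y⟫_𝕜 = 0 := by
    linear_combination hkey + (μ - v) * hcomb + w * ⟪x, P y⟫_𝕜 * hwv
  have ha : ⟪x, P y⟫_𝕜 = 0 := by
    simpa [hw, sub_eq_zero, hsum] using hwa
  refine ⟨ha, ?_⟩
  simpa [ha, hv] using hcomb

end

theorem cross_terms_vanish_general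
    {H : Type*} [NormedAddCommGroup H] [InnerProductSpace ℂ H]
    (P Q : H →ₗ[ℂ] H)
    (hP : IsOrthogonalProjection P) (hQ : IsOrthogonalProjection Q)
    (w : ℝ)
    (φ₀ φ₁ : H) (hφ₀ : φ₀ ≠ 0) (hφ₁ : φ₁ ≠ 0)
    (lam₀ lam₁ : ℂ)
    (heig₀ : ((w : ℂ) • P + ((1 - w : ℝ) : ℂ) • Q) φ₀ = lam₀ • φ₀)
    (heig₁ : ((w : ℂ) • P + ((1 - w : ℝ) : ℂ) • Q) φ₁ = lam₁ • φ₁)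
    (hsum : lam₀ + lam₁ ≠ 1) (hne : lam₀ ≠ lam₁) :
    ⟪φ₀, P φ₁⟫_ℂ = 0 ∧ ⟪φ₀, Q φ₁⟫_ℂ = 0 := by
  set A := (w : ℂ) • P + ((1 - w : ℝ) : ℂ) • Q
  have h₀ : HasEigenvector A lam₀ φ₀ := ⟨mem_eigenspace_iff.mpr heig₀, hφ₀⟩
  have h₁ : HasEigenvector A lam₁ φ₁ := ⟨mem_eigenspace_iff.mpr heig₁, hφ₁⟩
  have not_projection (R : H →ₗ[ℂ] H) (hR : IsOrthogonalProjection R) (hAR : A = R) : False := by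
    rw [hAR] at h₀ h₁
    exact hsum (hR.isIdempotentElem.add_eq_one_of_hasEigenvalue
      (hasEigenvalue_of_hasEigenvector h₀) (hasEigenvalue_of_hasEigenvector h₁) hne)
  have hw₀ : (w : ℂ) ≠ 0 := fun hw ↦
    not_projection Q hQ (by simp [A, Complex.ofReal_eq_zero.mp hw])
  have hw₁ : ((1 - w : ℝ) : ℂ) ≠ 0 := fun hw ↦
    not_projection P hP (by simp [A, (sub_eq_zero.mp (Complex.ofReal_eq_zero.mp hw)).symm])
  have hA : A.IsSymmetric :=
    (hP.isSymmetric.smul (Complex.conj_ofReal _)).add (hQ.isSymmetric.smul (Complex.conj_ofReal _))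
  exact inner_apply_eq_zero_of_hasEigenvector_smul_add_smul hP.isIdempotentElem
    hQ.isIdempotentElem hw₀ hw₁ (by push_cast; ring) hA h₀ h₁ hsum hne

/-- **Cross-term corollary of Jordan's lemma.** If `φ₀, φ₁` are eigenvectors of
`w • P + (1 - w) • Q` with eigenvalues `λ₀, λ₁` satisfying `λ₀ + λ₁ ≠ 1` and `λ₀ ≠ λ₁`,
then `⟪φ₀, P φ₁⟫ = ⟪φ₀, Q φ₁⟫ = 0`. -/
theorem cross_terms_vanish
    {H : Type*} [NormedAddCommGroup H] [InnerProductSpace ℂ H] [FiniteDimensional ℂ H]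
    (P Q : H →ₗ[ℂ] H)
    (hP : IsOrthogonalProjection P) (hQ : IsOrthogonalProjection Q)
    (w : ℝ) (hw : w ∈ Set.Icc (0 : ℝ) 1)
    (φ₀ φ₁ : H) (hφ₀ : φ₀ ≠ 0) (hφ₁ : φ₁ ≠ 0)
    (lam₀ lam₁ : ℂ)
    (heig₀ : ((w : ℂ) • P + ((1 - w : ℝ) : ℂ) • Q) φ₀ = lam₀ • φ₀)
    (heig₁ : ((w : ℂ) • P + ((1 - w : ℝ) : ℂ) • Q) φ₁ = lam₁ • φ₁)
    (hsum : lam₀ + lam₁ ≠ 1) (hne : lam₀ ≠ lam₁) :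
    ⟪φ₀, P φ₁⟫_ℂ = 0 ∧ ⟪φ₀, Q φ₁⟫_ℂ = 0 :=
  cross_terms_vanish_general P Q hP hQ w φ₀ φ₁ hφ₀ hφ₁ lam₀ lam₁ heig₀ heig₁ hsum hne
end

section
/- Let H be a finite-dimensional complex inner product space, let P and Q be orthogonal projections on H, let w ∈ [0,1], and let T = wP + (1−w)Q. Fix c ≥ 0. Suppose x lies in the span of eigenvectors of T whose eigenvalues λ satisfy |λ − 1/2| ≤ c, and y lies in the span of eigenvectors of T whose eigenvalues λ satisfy |λ − 1/2| > c. Then ⟨x, P y⟩ = 0 and ⟨x, Q y⟩ = 0. -/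
/-!
With `T = w P + (1 - w) Q`, idempotency gives `T² - T = -w(1 - w) (P - Q)²`, and `(P - Q)²`
commutes with `P` and `Q`. So `S = T² - T` is a symmetric operator commuting with `P` and `Q`,
and a `μ`-eigenvector of `T` is a `(μ² - μ)`-eigenvector of `S`. Since
`μ² - μ = (μ - 1/2)² - 1/4`, the two spans lie in sums of eigenspaces of `S` for disjoint sets
of eigenvalues; `P` and `Q` preserve the second sum, and eigenspaces of a symmetric operator for
distinct eigenvalues are orthogonal.
-/

open scoped InnerProductSpace

namespace IsIdempotentElem

variable {A : Type*} [Ring A] {p q : A}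

theorem commute_sub_sq (hp : IsIdempotentElem p) (hq : IsIdempotentElem q) :
    Commute ((p - q) ^ 2) p := by
  have hp' : p * p = p := hp.eq
  have hq' : q * q = q := hq.eq
  calc (p - q) ^ 2 * p = p - p * q * p := by
        simp only [sq, sub_mul, mul_sub, mul_assoc, hp', hq']; abel
    _ = p * (p - q) ^ 2 := by
        simp only [sq, sub_mul, mul_sub, ← mul_assoc, hp', hq']; abel

variable {R : Type*} [CommRing R] [Algebra R A]

theorem smul_add_one_sub_smul_sq_sub_self (hp : IsIdempotentElem p) (hq : IsIdempotentElem q)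
    (a : R) :
    (a • p + (1 - a) • q) ^ 2 - (a • p + (1 - a) • q) = -(a * (1 - a)) • (p - q) ^ 2 := by
  have hp' : p * p = p := hp.eq
  have hq' : q * q = q := hq.eq
  simp only [sq, add_mul, mul_add, sub_mul, mul_sub, smul_mul_smul_comm, hp', hq', smul_sub]
  module

theorem commute_smul_add_one_sub_smul_sq_sub_self (hp : IsIdempotentElem p)
    (hq : IsIdempotentElem q) (a : R) :
    Commute ((a • p + (1 - a) • q) ^ 2 - (a • p + (1 - a) • q)) p ∧
      Commute ((a • p + (1 - a) • q) ^ 2 - (a • p + (1 - a) • q)) q := by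
  rw [hp.smul_add_one_sub_smul_sq_sub_self hq]
  refine ⟨(hp.commute_sub_sq hq).smul_left _, ?_⟩
  rw [← neg_sq, neg_sub]
  exact (hq.commute_sub_sq hp).smul_left _

end IsIdempotentElem

namespace Module.End

variable {K M : Type*} [CommRing K] [AddCommGroup M] [Module K M]

theorem eigenspace_le_eigenspace_sq_sub_self (T : End K M) (μ : K) :
    eigenspace T μ ≤ eigenspace (T ^ 2 - T) (μ ^ 2 - μ) := fun _ hx => by
  rw [mem_eigenspace_iff] at hx ⊢
  rw [LinearMap.sub_apply, sq, mul_apply, hx, map_smul, hx, smul_smul, sub_smul, sq]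

theorem iSup_eigenspace_le_iSup_eigenspace_sq_sub_self (T : End K M) {ι : Sort*}
    (p : ι → Prop) (f : ι → K) :
    ⨆ i, ⨆ (_ : p i), eigenspace T (f i) ≤
      ⨆ i, ⨆ (_ : p i), eigenspace (T ^ 2 - T) (f i ^ 2 - f i) :=
  iSup₂_mono fun i _ => eigenspace_le_eigenspace_sq_sub_self T (f i)

theorem iSup_eigenspace_le_comap_of_commute {S R : End K M} (h : Commute S R)
    {ι : Sort*} (p : ι → Prop) (f : ι → K) :
    ⨆ i, ⨆ (_ : p i), eigenspace S (f i) ≤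
      (⨆ i, ⨆ (_ : p i), eigenspace S (f i)).comap R :=
  iSup₂_le fun i hi _ hx =>
    (le_iSup₂ (f := fun i (_ : p i) => eigenspace S (f i)) i hi)
      (mapsTo_genEigenspace_of_comm h (f i) 1 hx)

end Module.End

namespace LinearMap.IsSymmetric

open Module.End

variable {𝕜 E : Type*} [RCLike 𝕜] [NormedAddCommGroup E] [InnerProductSpace 𝕜 E]
  {S : E →ₗ[𝕜] E}

theorem isOrtho_iSup_eigenspace (hS : S.IsSymmetric) {ι κ : Sort*} {p : ι → Prop}
    {q : κ → Prop} {f : ι → 𝕜} {g : κ → 𝕜} (hfg : ∀ i j, p i → q j → f i ≠ g j) :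
    (⨆ i, ⨆ (_ : p i), eigenspace S (f i)) ⟂ ⨆ j, ⨆ (_ : q j), eigenspace S (g j) := by
  simp only [Submodule.isOrtho_iSup_left, Submodule.isOrtho_iSup_right]
  exact fun j hj i hi => hS.orthogonalFamily_eigenspaces.isOrtho (hfg i j hi hj)

theorem inner_map_eq_zero_of_mem_iSup_eigenspace (hS : S.IsSymmetric) {R : E →ₗ[𝕜] E}
    (hSR : Commute S R) {ι κ : Sort*} {p : ι → Prop} {q : κ → Prop} {f : ι → 𝕜} {g : κ → 𝕜}
    (hfg : ∀ i j, p i → q j → f i ≠ g j) {x y : E}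
    (hx : x ∈ ⨆ i, ⨆ (_ : p i), eigenspace S (f i))
    (hy : y ∈ ⨆ j, ⨆ (_ : q j), eigenspace S (g j)) :
    ⟪x, R y⟫_𝕜 = 0 :=
  (hS.isOrtho_iSup_eigenspace hfg).inner_eq hx (iSup_eigenspace_le_comap_of_commute hSR q g hy)

end LinearMap.IsSymmetric

theorem sq_sub_self_ne_of_abs_sub_half_le_of_lt {μ ν c : ℝ} (hμ : |μ - 1/2| ≤ c)
    (hν : c < |ν - 1/2|) :
    μ ^ 2 - μ ≠ ν ^ 2 - ν := fun h => by
  have : |μ - 1/2| = |ν - 1/2| := (sq_eq_sq_iff_abs_eq_abs _ _).1 (by linear_combination h)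
  linarith

theorem cross_terms_vanish_on_eigenvector_spans_general
    {H : Type*} [NormedAddCommGroup H] [InnerProductSpace ℂ H]
    (P Q : H →ₗ[ℂ] H)
    (hP : IsOrthogonalProjection P) (hQ : IsOrthogonalProjection Q)
    (w : ℝ) (c : ℝ)
    (x y : H)
    (hx : x ∈ ⨆ (μ : ℝ) (_ : |μ - 1/2| ≤ c),
      Module.End.eigenspace ((w : ℂ) • P + ((1 - w : ℝ) : ℂ) • Q) (μ : ℂ))
    (hy : y ∈ ⨆ (μ : ℝ) (_ : |μ - 1/2| > c),
      Module.End.eigenspace ((w : ℂ) • P + ((1 - w : ℝ) : ℂ) • Q) (μ : ℂ)) :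
    ⟪x, P y⟫_ℂ = 0 ∧ ⟪x, Q y⟫_ℂ = 0 := by
  push_cast at hx hy
  set T := (w : ℂ) • P + (1 - (w : ℂ)) • Q
  have hT : T.IsSymmetric :=
    (LinearMap.IsSymmetric.smul (by simp) hP.2).add (.smul (by simp) hQ.2)
  have hS : (T ^ 2 - T).IsSymmetric := (hT.pow 2).sub hT
  have hdisj (μ ν : ℝ) (hμ : |μ - 1/2| ≤ c) (hν : |ν - 1/2| > c) :
      (μ : ℂ) ^ 2 - μ ≠ (ν : ℂ) ^ 2 - ν := by
    exact_mod_cast sq_sub_self_ne_of_abs_sub_half_le_of_lt hμ hν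
  have hx' :=
    Module.End.iSup_eigenspace_le_iSup_eigenspace_sq_sub_self T _ (fun μ : ℝ => (μ : ℂ)) hx
  have hy' :=
    Module.End.iSup_eigenspace_le_iSup_eigenspace_sq_sub_self T _ (fun μ : ℝ => (μ : ℂ)) hy
  obtain ⟨hSP, hSQ⟩ :=
    IsIdempotentElem.commute_smul_add_one_sub_smul_sq_sub_self hP.1 hQ.1 (w : ℂ)
  exact ⟨hS.inner_map_eq_zero_of_mem_iSup_eigenspace hSP hdisj hx' hy',
    hS.inner_map_eq_zero_of_mem_iSup_eigenspace hSQ hdisj hx' hy'⟩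

/-- If `x` lies in the span of eigenvectors of `T = w • P + (1-w) • Q` with (real) eigenvalues
within `c` of `1/2`, and `y` lies in the span of eigenvectors with eigenvalues farther than `c`
from `1/2`, then the cross terms `⟪x, P y⟫` and `⟪x, Q y⟫` vanish. -/
theorem cross_terms_vanish_on_eigenvector_spans
    {H : Type*} [NormedAddCommGroup H] [InnerProductSpace ℂ H] [FiniteDimensional ℂ H]
    (P Q : H →ₗ[ℂ] H)
    (hP : IsOrthogonalProjection P) (hQ : IsOrthogonalProjection Q)
    (w : ℝ) (hw : w ∈ Set.Icc (0 : ℝ) 1) (c : ℝ) (hc : 0 ≤ c)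
    (x y : H)
    (hx : x ∈ ⨆ (μ : ℝ) (_ : |μ - 1/2| ≤ c),
      Module.End.eigenspace ((w : ℂ) • P + ((1 - w : ℝ) : ℂ) • Q) (μ : ℂ))
    (hy : y ∈ ⨆ (μ : ℝ) (_ : |μ - 1/2| > c),
      Module.End.eigenspace ((w : ℂ) • P + ((1 - w : ℝ) : ℂ) • Q) (μ : ℂ)) :
    ⟪x, P y⟫_ℂ = 0 ∧ ⟪x, Q y⟫_ℂ = 0 :=
  cross_terms_vanish_on_eigenvector_spans_general P Q hP hQ w c x y hx hy
end

section
/- Let m, k ≥ 1, let P₀, P₁ be orthogonal projections on ℂ^m and Q₀, Q₁ orthogonal projections on ℂ^k, let w ∈ [0,1] and ε > 0. Set M = wP₀ + (1−w)P₁ and N = wQ₀ + (1−w)Q₁. Let S_near be the sum of eigenspaces of M for eigenvalues λ with |λ − 1/2| ≤ |w − 1/2| + ε, let S_far be the sum of eigenspaces of M for eigenvalues λ with |λ − 1/2| > |w − 1/2| + ε, and let T_near be the sum of eigenspaces of N for eigenvalues μ with |μ − 1/2| ≤ |w − 1/2| + ε. Suppose v is a unit vector in the tensor product ℂ^m ⊗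 ℂ^k (with the induced inner product) which decomposes as v = v_B + v_C with v_B ∈ S_near ⊗ ℂ^k and v_C ∈ S_far ⊗ T_near. Then w·‖(P₀ ⊗ Q₀) v‖² + (1−w)·‖(P₁ ⊗ Q₁) v‖² ≤ max(w, 1−w) + ε. -/
open scoped Kronecker

/-- The sum of the eigenspaces of (the linear map induced by) the matrix `M` for the real
eigenvalues lying in the set `s`. -/
noncomputable def eigSpan {m : ℕ} (M : Matrix (Fin m) (Fin m) ℂ) (s : Set ℝ) :
    Submodule ℂ (EuclideanSpace ℂ (Fin m)) :=
  ⨆ (μ : ℝ) (_ : μ ∈ s), Module.End.eigenspace (Matrix.toEuclideanLin M) (μ : ℂ)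

/-- The tensor product `S ⊗ T` of subspaces `S ≤ ℂ^m` and `T ≤ ℂ^k`, realized inside
`ℂ^{m·k} = EuclideanSpace ℂ (Fin m × Fin k)` as the span of the elementary tensors
`x ⊗ y`, `(x ⊗ y)(p) = x p.1 * y p.2`, with `x ∈ S`, `y ∈ T`. -/
noncomputable def tensorSubmodule {m k : ℕ} (S : Submodule ℂ (EuclideanSpace ℂ (Fin m)))
    (T : Submodule ℂ (EuclideanSpace ℂ (Fin k))) :
    Submodule ℂ (EuclideanSpace ℂ (Fin m × Fin k)) :=
  Submodule.span ℂ
    {u : EuclideanSpace ℂ (Fin m × Fin k) |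
      ∃ x ∈ S, ∃ y ∈ T, ∀ p : Fin m × Fin k, u p = x p.1 * y p.2}

/-! For projections `P₀, P₁` and `M = w P₀ + (1 - w) P₁` one has
`(M - 1/2)² = 1/4 - w (1 - w) (P₀ - P₁)²`, and `(P₀ - P₁)²` commutes with `P₀` and `P₁`. Hence every
spectral subspace of `M` cut out by a condition on `|μ - 1/2|` is a spectral subspace of
`(M - 1/2)²`, so it is invariant under `P₀` and `P₁`. Thus each `P_b ⊗ Q_b` preserves the orthogonal
subspaces `S_near ⊗ ℂ^k ∋ v_B` and `S_far ⊗ ℂ^k ∋ v_C`, and the left-hand side splits into the same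
expression for `v_B` plus the one for `v_C`. As `‖(P ⊗ Q) u‖ ≤ ‖(P ⊗ 1) u‖`, the `v_B` part is at
most `⟪v_B, (M ⊗ 1) v_B⟫ ≤ (1/2 + |w - 1/2| + ε) ‖v_B‖²`, the `v_C` part is bounded in the same way
through `1 ⊗ N`, and `1/2 + |w - 1/2| = max w (1 - w)`. -/

theorem abs_sub_half_add_half (w : ℝ) : |w - 1 / 2| + 1 / 2 = max w (1 - w) := by
  rw [abs_eq_max_neg, ← max_add_add_right]
  congr 1 <;> ring

theorem IsIdempotentElem.commute_sub_sq_s5 {R : Type*} [Ring R] {A B : R} (hA : IsIdempotentElem A)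
    (hB : IsIdempotentElem B) : Commute A ((A - B) ^ 2) := by
  have hA' : ∀ X : R, A * (A * X) = A * X := fun X => by rw [← mul_assoc, hA.eq]
  simp only [Commute, SemiconjBy, sq, sub_mul, mul_sub, mul_assoc, hA.eq, hB.eq, hA']
  abel

theorem IsIdempotentElem.commute_smul_add_smul_sub_sq {S R : Type*} [CommRing S] [Ring R]
    [Algebra S R] {A B : R} (hA : IsIdempotentElem A) (hB : IsIdempotentElem B) {a b c : S}
    (habc : a + b = 2 * c) : Commute A ((a • A + b • B - c • 1) ^ 2) := by
  have key : (a • A + b • B - c • 1) ^ 2 = (c ^ 2) • 1 - (a * b) • (A - B) ^ 2 := by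
    obtain rfl : b = 2 * c - a := by rw [← habc]; ring
    simp only [sq, add_mul, mul_add, sub_mul, mul_sub, smul_mul_assoc, mul_smul_comm, smul_smul,
      hA.eq, hB.eq, one_mul, mul_one, smul_sub, smul_add]
    match_scalars <;> ring
  rw [key]
  exact ((Commute.one_right A).smul_right _).sub_right ((hA.commute_sub_sq_s5 hB).smul_right _)

theorem Submodule.IsOrtho.norm_add_sq {𝕜 V : Type*} [RCLike 𝕜] [NormedAddCommGroup V]
    [InnerProductSpace 𝕜 V] {X Y : Submodule 𝕜 V} (h : X ⟂ Y) {x y : V} (hx : x ∈ X)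
    (hy : y ∈ Y) : ‖x + y‖ ^ 2 = ‖x‖ ^ 2 + ‖y‖ ^ 2 := by
  rw [sq, sq, sq,
    norm_add_sq_eq_norm_sq_add_norm_sq_of_inner_eq_zero (𝕜 := 𝕜) _ _ (h.inner_eq hx hy)]

namespace LinearMap

open Module End

variable {𝕜 V : Type*} [RCLike 𝕜] [NormedAddCommGroup V] [InnerProductSpace 𝕜 V]

noncomputable def spectralSubspace (f : V →ₗ[𝕜] V) (s : Set ℝ) : Submodule 𝕜 V :=
  ⨆ (μ : ℝ) (_ : μ ∈ s), eigenspace f (μ : 𝕜)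

variable {f : V →ₗ[𝕜] V}

theorem eigenspace_le_spectralSubspace {s : Set ℝ} {μ : ℝ} (hμ : μ ∈ s) :
    eigenspace f (μ : 𝕜) ≤ f.spectralSubspace s :=
  le_iSup₂_of_le μ hμ le_rfl

theorem spectralSubspace_le_comap {W : Type*} [NormedAddCommGroup W] [InnerProductSpace 𝕜 W]
    {g : W →ₗ[𝕜] W} {L : V →ₗ[𝕜] W} (hL : g ∘ₗ L = L ∘ₗ f) (s : Set ℝ) :
    f.spectralSubspace s ≤ (g.spectralSubspace s).comap L := by
  refine iSup₂_le fun μ hμ x hx => eigenspace_le_spectralSubspace hμ ?_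
  rw [mem_eigenspace_iff] at hx ⊢
  rw [← comp_apply, hL, comp_apply, hx, map_smul]

theorem spectralSubspace_le_comap_of_commute {g : V →ₗ[𝕜] V} (h : Commute f g) (s : Set ℝ) :
    f.spectralSubspace s ≤ (f.spectralSubspace s).comap g :=
  spectralSubspace_le_comap h.eq s

theorem IsSymmetric.spectralSubspace_isOrtho (hf : f.IsSymmetric) {s t : Set ℝ}
    (hst : Disjoint s t) : f.spectralSubspace s ⟂ f.spectralSubspace t := by
  refine Submodule.isOrtho_iSup_left.2 fun μ => Submodule.isOrtho_iSup_left.2 fun hμ =>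
    Submodule.isOrtho_iSup_right.2 fun ν => Submodule.isOrtho_iSup_right.2 fun hν =>
      hf.orthogonalFamily_eigenspaces.isOrtho ?_
  exact_mod_cast hst.ne_of_mem hμ hν

theorem IsSymmetric.ofReal_smul_add_ofReal_smul {A B : V →ₗ[𝕜] V} (hA : A.IsSymmetric)
    (hB : B.IsSymmetric) (a b : ℝ) : ((a : 𝕜) • A + (b : 𝕜) • B).IsSymmetric :=
  (hA.smul (RCLike.conj_ofReal a)).add (hB.smul (RCLike.conj_ofReal b))

theorem IsSymmetricProjection.re_inner_apply_self {p : V →ₗ[𝕜] V} (hp : p.IsSymmetricProjection)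
    (x : V) : RCLike.re (inner 𝕜 x (p x)) = ‖p x‖ ^ 2 := by
  have hpp : p (p x) = p x := LinearMap.congr_fun hp.isIdempotentElem.eq x
  conv_lhs => rw [← hpp, ← hp.isSymmetric]
  exact inner_self_eq_norm_sq _

theorem IsSymmetricProjection.norm_apply_le {p : V →ₗ[𝕜] V} (hp : p.IsSymmetricProjection)
    (x : V) : ‖p x‖ ≤ ‖x‖ := by
  rcases (norm_nonneg (p x)).eq_or_lt with h | h
  · rw [← h]; exact norm_nonneg x
  refine le_of_mul_le_mul_right ?_ h
  rw [← sq, ← hp.re_inner_apply_self]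
  exact (RCLike.re_le_norm _).trans (norm_inner_le_norm x (p x))

variable [FiniteDimensional 𝕜 V]

theorem IsSymmetric.spectralSubspace_sup_compl (hf : f.IsSymmetric) (s : Set ℝ) :
    f.spectralSubspace s ⊔ f.spectralSubspace sᶜ = ⊤ := by
  rw [eq_top_iff,
    ← Submodule.orthogonal_eq_bot_iff.1 hf.orthogonalComplement_iSup_eigenspaces_eq_bot]
  refine iSup_le fun μ => ?_
  by_cases hμ : HasEigenvalue f μ
  · obtain ⟨r, rfl⟩ : ∃ r : ℝ, (r : 𝕜) = μ :=
      ⟨RCLike.re μ, RCLike.conj_eq_iff_re.1 (hf.conj_eigenvalue_eq_self hμ)⟩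
    by_cases hr : r ∈ s
    · exact le_sup_of_le_left (eigenspace_le_spectralSubspace hr)
    · exact le_sup_of_le_right (eigenspace_le_spectralSubspace hr)
  · rw [hasEigenvalue_iff, not_not] at hμ
    simp [hμ]

theorem IsSymmetric.orthogonal_spectralSubspace (hf : f.IsSymmetric) (s : Set ℝ) :
    (f.spectralSubspace s)ᗮ = f.spectralSubspace sᶜ := by
  refine ((le_iff_eq_of_codisjoint_of_disjoint ?_ (Submodule.isCompl_orthogonal _).disjoint).1
    (Submodule.isOrtho_iff_le.1 (hf.spectralSubspace_isOrtho disjoint_compl_left))).symm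
  rw [codisjoint_iff, sup_comm]
  exact hf.spectralSubspace_sup_compl s

theorem IsSymmetric.spectralSubspace_preimage {K : V →ₗ[𝕜] V} (hf : f.IsSymmetric)
    (hK : K.IsSymmetric) (φ : ℝ → ℝ)
    (hφ : ∀ μ : ℝ, eigenspace f (μ : 𝕜) ≤ eigenspace K (φ μ : 𝕜)) (t : Set ℝ) :
    f.spectralSubspace (φ ⁻¹' t) = K.spectralSubspace t := by
  have hle : ∀ t, f.spectralSubspace (φ ⁻¹' t) ≤ K.spectralSubspace t := fun t =>
    iSup₂_le fun μ hμ => (hφ μ).trans (eigenspace_le_spectralSubspace hμ)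
  refine (hle t).antisymm ?_
  rw [← compl_compl (φ ⁻¹' t), ← hf.orthogonal_spectralSubspace, ← Submodule.isOrtho_iff_le]
  exact (hK.spectralSubspace_isOrtho disjoint_compl_right).mono_right (hle tᶜ)

theorem IsSymmetric.re_inner_apply_self_le (hf : f.IsSymmetric) {s : Set ℝ} {c : ℝ}
    (hs : ∀ μ ∈ s, μ ≤ c) {x : V} (hx : x ∈ f.spectralSubspace s) :
    RCLike.re (inner 𝕜 x (f x)) ≤ c * ‖x‖ ^ 2 := by
  set b := hf.eigenvectorBasis rfl
  set ev := hf.eigenvalues rfl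
  have hterm : ∀ i, inner 𝕜 x (b i) * inner 𝕜 (b i) (f x)
      = (ev i : 𝕜) * (‖inner 𝕜 (b i) x‖ ^ 2 : ℝ) := by
    intro i
    rw [← hf, hf.apply_eigenvectorBasis, inner_smul_left, RCLike.conj_ofReal, ← inner_conj_symm x,
      mul_left_comm, RCLike.conj_mul]
    push_cast
    ring
  have hvanish : ∀ i, ev i ∉ s → inner 𝕜 (b i) x = 0 := by
    intro i hi
    have hbi : b i ∈ f.spectralSubspace {ev i} := eigenspace_le_spectralSubspace
      (Set.mem_singleton _) (hf.hasEigenvector_eigenvectorBasis rfl i).1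
    exact (hf.spectralSubspace_isOrtho (Set.disjoint_singleton_left.2 hi)).inner_eq hbi hx
  calc RCLike.re (inner 𝕜 x (f x))
      = ∑ i, ev i * ‖inner 𝕜 (b i) x‖ ^ 2 := by
        simp only [← b.sum_inner_mul_inner x (f x), hterm, map_sum, RCLike.re_ofReal_mul,
          RCLike.ofReal_re]
    _ ≤ ∑ i, c * ‖inner 𝕜 (b i) x‖ ^ 2 := by
        refine Finset.sum_le_sum fun i _ => ?_
        by_cases hi : ev i ∈ s
        · exact mul_le_mul_of_nonneg_right (hs _ hi) (by positivity)
        · simp [hvanish i hi]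
    _ = c * ‖x‖ ^ 2 := by rw [← Finset.mul_sum, b.sum_sq_norm_inner_right]

theorem IsSymmetricProjection.spectralSubspace_abs_sub_half_le_comap {A B : V →ₗ[𝕜] V}
    (hA : A.IsSymmetricProjection) (hB : B.IsSymmetricProjection) {a b : ℝ} (hab : a + b = 1)
    (u : Set ℝ) :
    ((a : 𝕜) • A + (b : 𝕜) • B).spectralSubspace {μ | |μ - 1 / 2| ∈ u}
      ≤ (((a : 𝕜) • A + (b : 𝕜) • B).spectralSubspace {μ | |μ - 1 / 2| ∈ u}).comap A := by
  set f := (a : 𝕜) • A + (b : 𝕜) • B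
  have hf : f.IsSymmetric := hA.isSymmetric.ofReal_smul_add_ofReal_smul hB.isSymmetric a b
  set K := (f - ((1 / 2 : ℝ) : 𝕜) • 1) ^ 2
  have hK : K.IsSymmetric := (hf.sub (IsSymmetric.one.smul (RCLike.conj_ofReal _))).pow 2
  have hφ : ∀ μ : ℝ, eigenspace f (μ : 𝕜) ≤ eigenspace K (((μ - 1 / 2) ^ 2 : ℝ) : 𝕜) := by
    intro μ x hx
    rw [mem_eigenspace_iff] at hx ⊢
    have hshift : (f - ((1 / 2 : ℝ) : 𝕜) • 1) x = ((μ - 1 / 2 : ℝ) : 𝕜) • x := by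
      rw [sub_apply, hx, smul_apply, one_apply, ← sub_smul, RCLike.ofReal_sub]
    change ((f - ((1 / 2 : ℝ) : 𝕜) • 1) ^ 2 : V →ₗ[𝕜] V) x = _
    rw [sq, mul_apply, hshift, map_smul, hshift, smul_smul, ← RCLike.ofReal_mul, ← sq]
  have hu : {μ : ℝ | |μ - 1 / 2| ∈ u} = (fun μ => (μ - 1 / 2) ^ 2) ⁻¹' {κ | √κ ∈ u} := by
    ext μ
    simp [Real.sqrt_sq_eq_abs]
  have hcomm : Commute A K :=
    hA.isIdempotentElem.commute_smul_add_smul_sub_sq hB.isIdempotentElem (by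
      rw [← RCLike.ofReal_add, hab]; push_cast; ring)
  rw [hu, hf.spectralSubspace_preimage hK _ hφ]
  exact spectralSubspace_le_comap_of_commute hcomm.symm _

theorem IsSymmetricProjection.weighted_norm_sq_comp_le {p₀ p₁ r₀ r₁ : V →ₗ[𝕜] V}
    (hp₀ : p₀.IsSymmetricProjection) (hp₁ : p₁.IsSymmetricProjection)
    (hr₀ : r₀.IsSymmetricProjection) (hr₁ : r₁.IsSymmetricProjection) {w : ℝ}
    (hw : w ∈ Set.Icc (0 : ℝ) 1) {s : Set ℝ} {c : ℝ} (hs : ∀ μ ∈ s, μ ≤ c) {x : V}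
    (hx : x ∈ ((w : 𝕜) • p₀ + ((1 - w : ℝ) : 𝕜) • p₁).spectralSubspace s) :
    w * ‖r₀ (p₀ x)‖ ^ 2 + (1 - w) * ‖r₁ (p₁ x)‖ ^ 2 ≤ c * ‖x‖ ^ 2 := by
  obtain ⟨hw₀, hw₁⟩ := hw
  have hw₁' : 0 ≤ 1 - w := sub_nonneg.2 hw₁
  calc w * ‖r₀ (p₀ x)‖ ^ 2 + (1 - w) * ‖r₁ (p₁ x)‖ ^ 2
      ≤ w * ‖p₀ x‖ ^ 2 + (1 - w) * ‖p₁ x‖ ^ 2 := by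
        gcongr
        exacts [hr₀.norm_apply_le _, hr₁.norm_apply_le _]
    _ = RCLike.re (inner 𝕜 x (((w : 𝕜) • p₀ + ((1 - w : ℝ) : 𝕜) • p₁) x)) := by
        simp only [add_apply, smul_apply, inner_add_right, inner_smul_right, map_add,
          RCLike.re_ofReal_mul, hp₀.re_inner_apply_self, hp₁.re_inner_apply_self]
    _ ≤ c * ‖x‖ ^ 2 :=
        (hp₀.isSymmetric.ofReal_smul_add_ofReal_smul hp₁.isSymmetric _ _).re_inner_apply_self_le
          hs hx

end LinearMap

namespace Matrix

open LinearMap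

variable {𝕜 ι κ : Type*} [RCLike 𝕜]

theorem IsHermitian.ofReal_smul_add_ofReal_smul {A B : Matrix ι ι ℂ} (hA : A.IsHermitian)
    (hB : B.IsHermitian) (a b : ℝ) : ((a : ℂ) • A + (b : ℂ) • B).IsHermitian :=
  (hA.smul (Complex.conj_ofReal a)).add (hB.smul (Complex.conj_ofReal b))

variable [Fintype ι] [Fintype κ]

theorem _root_.IsStarProjection.kronecker {P : Matrix ι ι 𝕜} {Q : Matrix κ κ 𝕜}
    (hP : IsStarProjection P) (hQ : IsStarProjection Q) : IsStarProjection (P ⊗ₖ Q) where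
  isIdempotentElem := by
    rw [IsIdempotentElem, ← mul_kronecker_mul, hP.isIdempotentElem.eq, hQ.isIdempotentElem.eq]
  isSelfAdjoint := by
    rw [IsSelfAdjoint, star_eq_conjTranspose, conjTranspose_kronecker, ← star_eq_conjTranspose,
      ← star_eq_conjTranspose, hP.isSelfAdjoint.star_eq, hQ.isSelfAdjoint.star_eq]

variable [DecidableEq ι] [DecidableEq κ]

theorem toEuclideanLin_mul (A B : Matrix ι ι 𝕜) :
    toEuclideanLin (A * B) = toEuclideanLin A * toEuclideanLin B := by
  rw [← coe_toEuclideanCLM_eq_toEuclideanLin, map_mul]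
  rfl

theorem isSymmetricProjection_toEuclideanLin {P : Matrix ι ι 𝕜} (hP : IsStarProjection P) :
    (toEuclideanLin P).IsSymmetricProjection := by
  rw [← coe_toEuclideanCLM_eq_toEuclideanLin]
  exact ContinuousLinearMap.isStarProjection_iff_isSymmetricProjection.1 (hP.map toEuclideanCLM)

theorem isSymmetricProjection_toEuclideanLin_kronecker {P : Matrix ι ι 𝕜} {Q : Matrix κ κ 𝕜}
    (hP : IsStarProjection P) (hQ : IsStarProjection Q) :
    (toEuclideanLin (P ⊗ₖ Q)).IsSymmetricProjection :=
  isSymmetricProjection_toEuclideanLin (hP.kronecker hQ)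

variable {P₀ P₁ : Matrix ι ι 𝕜} {Q₀ Q₁ : Matrix κ κ 𝕜} {w : ℝ} {s : Set ℝ} {c : ℝ}
  {u : EuclideanSpace 𝕜 (ι × κ)}

theorem weighted_norm_sq_kronecker_le_of_kronecker_one (hP₀ : IsStarProjection P₀)
    (hP₁ : IsStarProjection P₁) (hQ₀ : IsStarProjection Q₀) (hQ₁ : IsStarProjection Q₁)
    (hw : w ∈ Set.Icc (0 : ℝ) 1) (hs : ∀ μ ∈ s, μ ≤ c)
    (hu : u ∈ (toEuclideanLin (((w : 𝕜) • P₀ + ((1 - w : ℝ) : 𝕜) • P₁) ⊗ₖ (1 : Matrix κ κ 𝕜))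
      ).spectralSubspace s) :
    w * ‖toEuclideanLin (P₀ ⊗ₖ Q₀) u‖ ^ 2 + (1 - w) * ‖toEuclideanLin (P₁ ⊗ₖ Q₁) u‖ ^ 2
      ≤ c * ‖u‖ ^ 2 := by
  have hfactor : ∀ (P : Matrix ι ι 𝕜) (Q : Matrix κ κ 𝕜),
      toEuclideanLin (P ⊗ₖ Q) u = toEuclideanLin (1 ⊗ₖ Q) (toEuclideanLin (P ⊗ₖ 1) u) := by
    intro P Q
    rw [← Module.End.mul_apply, ← toEuclideanLin_mul, ← mul_kronecker_mul, one_mul, mul_one]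
  rw [add_kronecker, smul_kronecker, smul_kronecker, map_add, map_smul, map_smul] at hu
  rw [hfactor P₀ Q₀, hfactor P₁ Q₁]
  exact IsSymmetricProjection.weighted_norm_sq_comp_le
    (isSymmetricProjection_toEuclideanLin_kronecker hP₀ (IsStarProjection.one _))
    (isSymmetricProjection_toEuclideanLin_kronecker hP₁ (IsStarProjection.one _))
    (isSymmetricProjection_toEuclideanLin_kronecker (IsStarProjection.one _) hQ₀)
    (isSymmetricProjection_toEuclideanLin_kronecker (IsStarProjection.one _) hQ₁) hw hs hu

theorem weighted_norm_sq_kronecker_le_of_one_kronecker (hP₀ : IsStarProjection P₀)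
    (hP₁ : IsStarProjection P₁) (hQ₀ : IsStarProjection Q₀) (hQ₁ : IsStarProjection Q₁)
    (hw : w ∈ Set.Icc (0 : ℝ) 1) (hs : ∀ μ ∈ s, μ ≤ c)
    (hu : u ∈ (toEuclideanLin ((1 : Matrix ι ι 𝕜) ⊗ₖ ((w : 𝕜) • Q₀ + ((1 - w : ℝ) : 𝕜) • Q₁))
      ).spectralSubspace s) :
    w * ‖toEuclideanLin (P₀ ⊗ₖ Q₀) u‖ ^ 2 + (1 - w) * ‖toEuclideanLin (P₁ ⊗ₖ Q₁) u‖ ^ 2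
      ≤ c * ‖u‖ ^ 2 := by
  have hfactor : ∀ (P : Matrix ι ι 𝕜) (Q : Matrix κ κ 𝕜),
      toEuclideanLin (P ⊗ₖ Q) u = toEuclideanLin (P ⊗ₖ 1) (toEuclideanLin (1 ⊗ₖ Q) u) := by
    intro P Q
    rw [← Module.End.mul_apply, ← toEuclideanLin_mul, ← mul_kronecker_mul, one_mul, mul_one]
  rw [kronecker_add, kronecker_smul, kronecker_smul, map_add, map_smul, map_smul] at hu
  rw [hfactor P₀ Q₀, hfactor P₁ Q₁]
  exact IsSymmetricProjection.weighted_norm_sq_comp_le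
    (isSymmetricProjection_toEuclideanLin_kronecker (IsStarProjection.one _) hQ₀)
    (isSymmetricProjection_toEuclideanLin_kronecker (IsStarProjection.one _) hQ₁)
    (isSymmetricProjection_toEuclideanLin_kronecker hP₀ (IsStarProjection.one _))
    (isSymmetricProjection_toEuclideanLin_kronecker hP₁ (IsStarProjection.one _)) hw hs hu

end Matrix

namespace EuclideanSpace

variable {𝕜 ι κ : Type*} [RCLike 𝕜]

noncomputable def kronecker :
    EuclideanSpace 𝕜 ι →ₗ[𝕜] EuclideanSpace 𝕜 κ →ₗ[𝕜] EuclideanSpace 𝕜 (ι × κ) :=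
  LinearMap.mk₂ 𝕜 (fun x y => WithLp.toLp 2 fun p => x p.1 * y p.2)
    (fun _ _ _ => by ext; simp [add_mul]) (fun _ _ _ => by ext; simp [mul_assoc])
    (fun _ _ _ => by ext; simp [mul_add]) (fun _ _ _ => by ext; simp [mul_left_comm])

@[simp]
theorem kronecker_apply (x : EuclideanSpace 𝕜 ι) (y : EuclideanSpace 𝕜 κ) (p : ι × κ) :
    kronecker x y p = x p.1 * y p.2 := rfl

variable [Fintype ι] [Fintype κ]

theorem inner_kronecker_kronecker (x x' : EuclideanSpace 𝕜 ι) (y y' : EuclideanSpace 𝕜 κ) :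
    inner 𝕜 (kronecker x y) (kronecker x' y') = inner 𝕜 x x' * inner 𝕜 y y' := by
  simp [PiLp.inner_apply, Fintype.sum_prod_type, Finset.sum_mul_sum, mul_mul_mul_comm]

theorem toEuclideanLin_kronecker_kronecker [DecidableEq ι] [DecidableEq κ] (A : Matrix ι ι 𝕜)
    (B : Matrix κ κ 𝕜) (x : EuclideanSpace 𝕜 ι) (y : EuclideanSpace 𝕜 κ) :
    Matrix.toEuclideanLin (A ⊗ₖ B) (kronecker x y) =
      kronecker (Matrix.toEuclideanLin A x) (Matrix.toEuclideanLin B y) := by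
  ext p
  simp [Matrix.mulVec, dotProduct, Fintype.sum_prod_type, Finset.sum_mul_sum, mul_mul_mul_comm]

end EuclideanSpace

section TensorSubmodule

open EuclideanSpace LinearMap

variable {m k : ℕ} {S S' : Submodule ℂ (EuclideanSpace ℂ (Fin m))}
  {T T' : Submodule ℂ (EuclideanSpace ℂ (Fin k))}

theorem tensorSubmodule_eq_span :
    tensorSubmodule S T = Submodule.span ℂ (Set.image2 (fun x y => kronecker x y) S T) := by
  rw [tensorSubmodule]
  refine congrArg _ (Set.ext fun u => ⟨?_, ?_⟩)
  · rintro ⟨x, hx, y, hy, hu⟩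
    exact ⟨x, hx, y, hy, by ext p; exact (hu p).symm⟩
  · rintro ⟨x, hx, y, hy, rfl⟩
    exact ⟨x, hx, y, hy, fun _ => rfl⟩

theorem tensorSubmodule_le {U : Submodule ℂ (EuclideanSpace ℂ (Fin m × Fin k))}
    (h : ∀ x ∈ S, ∀ y ∈ T, kronecker x y ∈ U) : tensorSubmodule S T ≤ U := by
  rw [tensorSubmodule_eq_span, Submodule.span_le]
  exact Set.image2_subset_iff.2 h

theorem kronecker_mem_tensorSubmodule {x : EuclideanSpace ℂ (Fin m)}
    {y : EuclideanSpace ℂ (Fin k)} (hx : x ∈ S) (hy : y ∈ T) :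
    kronecker x y ∈ tensorSubmodule S T := by
  rw [tensorSubmodule_eq_span]
  exact Submodule.subset_span (Set.mem_image2_of_mem hx hy)

theorem tensorSubmodule_mono (hS : S ≤ S') (hT : T ≤ T') :
    tensorSubmodule S T ≤ tensorSubmodule S' T' :=
  tensorSubmodule_le fun _ hx _ hy => kronecker_mem_tensorSubmodule (hS hx) (hT hy)

theorem tensorSubmodule_isOrtho_of_isOrtho_left (h : S ⟂ S') :
    tensorSubmodule S T ⟂ tensorSubmodule S' T' := by
  rw [tensorSubmodule_eq_span, tensorSubmodule_eq_span, Submodule.isOrtho_span]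
  rintro _ ⟨x, hx, y, -, rfl⟩ _ ⟨x', hx', y', -, rfl⟩
  rw [inner_kronecker_kronecker, h.inner_eq hx hx', zero_mul]

theorem tensorSubmodule_le_comap_kronecker {A : Matrix (Fin m) (Fin m) ℂ}
    {B : Matrix (Fin k) (Fin k) ℂ} (hA : S ≤ S'.comap (Matrix.toEuclideanLin A))
    (hB : T ≤ T'.comap (Matrix.toEuclideanLin B)) :
    tensorSubmodule S T ≤ (tensorSubmodule S' T').comap (Matrix.toEuclideanLin (A ⊗ₖ B)) :=
  tensorSubmodule_le fun _ hx _ hy => by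
    rw [Submodule.mem_comap, toEuclideanLin_kronecker_kronecker]
    exact kronecker_mem_tensorSubmodule (hA hx) (hB hy)

theorem tensorSubmodule_eigSpan_top_le (M : Matrix (Fin m) (Fin m) ℂ) (s : Set ℝ) :
    tensorSubmodule (eigSpan M s) ⊤
      ≤ (Matrix.toEuclideanLin (M ⊗ₖ (1 : Matrix (Fin k) (Fin k) ℂ))).spectralSubspace s := by
  refine tensorSubmodule_le fun x hx y _ => ?_
  have hL : Matrix.toEuclideanLin (M ⊗ₖ 1) ∘ₗ kronecker.flip y
      = kronecker.flip y ∘ₗ Matrix.toEuclideanLin M := by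
    ext1 x
    simp [toEuclideanLin_kronecker_kronecker]
  exact spectralSubspace_le_comap hL s hx

theorem tensorSubmodule_top_eigSpan_le (N : Matrix (Fin k) (Fin k) ℂ) (s : Set ℝ) :
    tensorSubmodule ⊤ (eigSpan N s)
      ≤ (Matrix.toEuclideanLin ((1 : Matrix (Fin m) (Fin m) ℂ) ⊗ₖ N)).spectralSubspace s := by
  refine tensorSubmodule_le fun x _ y hy => ?_
  have hL : Matrix.toEuclideanLin (1 ⊗ₖ N) ∘ₗ kronecker x
      = kronecker x ∘ₗ Matrix.toEuclideanLin N := by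
    ext1 y
    simp [toEuclideanLin_kronecker_kronecker]
  exact spectralSubspace_le_comap hL s hy

theorem tensorSubmodule_eigSpan_isOrtho {M : Matrix (Fin m) (Fin m) ℂ} (hM : M.IsHermitian)
    (c : ℝ) (T T' : Submodule ℂ (EuclideanSpace ℂ (Fin k))) :
    tensorSubmodule (eigSpan M {μ | |μ - 1 / 2| ≤ c}) T
      ⟂ tensorSubmodule (eigSpan M {μ | |μ - 1 / 2| > c}) T' :=
  tensorSubmodule_isOrtho_of_isOrtho_left <|
    (Matrix.isSymmetric_toEuclideanLin_iff.2 hM).spectralSubspace_isOrtho <|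
      Set.disjoint_left.2 fun _ (h₁ : _ ≤ c) (h₂ : c < _) => h₁.not_gt h₂

theorem eigSpan_abs_sub_half_le_comap {P₀ P₁ : Matrix (Fin m) (Fin m) ℂ}
    (hP₀ : IsStarProjection P₀) (hP₁ : IsStarProjection P₁) {a b : ℝ} (hab : a + b = 1)
    (u : Set ℝ) :
    eigSpan ((a : ℂ) • P₀ + (b : ℂ) • P₁) {μ | |μ - 1 / 2| ∈ u}
      ≤ (eigSpan ((a : ℂ) • P₀ + (b : ℂ) • P₁) {μ | |μ - 1 / 2| ∈ u}).comap
        (Matrix.toEuclideanLin P₀) := by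
  have hlin : Matrix.toEuclideanLin ((a : ℂ) • P₀ + (b : ℂ) • P₁)
      = (a : ℂ) • Matrix.toEuclideanLin P₀ + (b : ℂ) • Matrix.toEuclideanLin P₁ := by
    simp only [map_add, map_smul]
  rw [eigSpan, hlin]
  exact (Matrix.isSymmetricProjection_toEuclideanLin hP₀).spectralSubspace_abs_sub_half_le_comap
    (Matrix.isSymmetricProjection_toEuclideanLin hP₁) hab u

theorem norm_sq_toEuclideanLin_kronecker_add {P₀ P₁ : Matrix (Fin m) (Fin m) ℂ}
    (hP₀ : IsStarProjection P₀) (hP₁ : IsStarProjection P₁) {a b : ℝ} (hab : a + b = 1) (c : ℝ)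
    (Q : Matrix (Fin k) (Fin k) ℂ) {x y : EuclideanSpace ℂ (Fin m × Fin k)}
    (hx : x ∈ tensorSubmodule (eigSpan ((a : ℂ) • P₀ + (b : ℂ) • P₁) {μ | |μ - 1 / 2| ≤ c}) ⊤)
    (hy : y ∈ tensorSubmodule (eigSpan ((a : ℂ) • P₀ + (b : ℂ) • P₁) {μ | |μ - 1 / 2| > c}) ⊤) :
    ‖Matrix.toEuclideanLin (P₀ ⊗ₖ Q) (x + y)‖ ^ 2
      = ‖Matrix.toEuclideanLin (P₀ ⊗ₖ Q) x‖ ^ 2 + ‖Matrix.toEuclideanLin (P₀ ⊗ₖ Q) y‖ ^ 2 := by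
  have hinv : ∀ u : Set ℝ, tensorSubmodule
      (eigSpan ((a : ℂ) • P₀ + (b : ℂ) • P₁) {μ | |μ - 1 / 2| ∈ u}) (⊤ : Submodule ℂ _)
      ≤ (tensorSubmodule _ ⊤).comap (Matrix.toEuclideanLin (P₀ ⊗ₖ Q)) := fun u =>
    tensorSubmodule_le_comap_kronecker (eigSpan_abs_sub_half_le_comap hP₀ hP₁ hab u)
      fun _ _ => Submodule.mem_top
  have hM := hP₀.isSelfAdjoint.isHermitian.ofReal_smul_add_ofReal_smul
    hP₁.isSelfAdjoint.isHermitian a b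
  rw [map_add]
  exact (tensorSubmodule_eigSpan_isOrtho hM c ⊤ ⊤).norm_add_sq (hinv (Set.Iic c) hx)
    (hinv (Set.Ioi c) hy)

end TensorSubmodule

theorem identical_challenge_bound_general
    (m k : ℕ)
    (P₀ P₁ : Matrix (Fin m) (Fin m) ℂ) (Q₀ Q₁ : Matrix (Fin k) (Fin k) ℂ)
    (hP₀h : P₀.IsHermitian) (hP₀i : P₀ * P₀ = P₀)
    (hP₁h : P₁.IsHermitian) (hP₁i : P₁ * P₁ = P₁)
    (hQ₀h : Q₀.IsHermitian) (hQ₀i : Q₀ * Q₀ = Q₀)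
    (hQ₁h : Q₁.IsHermitian) (hQ₁i : Q₁ * Q₁ = Q₁)
    (w ε : ℝ) (hw : w ∈ Set.Icc (0 : ℝ) 1)
    (v vB vC : EuclideanSpace ℂ (Fin m × Fin k))
    (hv : ‖v‖ = 1)
    (hsplit : v = vB + vC)
    (hvB : vB ∈ tensorSubmodule
      (eigSpan ((w : ℂ) • P₀ + ((1 - w : ℝ) : ℂ) • P₁) {μ : ℝ | |μ - 1/2| ≤ |w - 1/2| + ε})
      (⊤ : Submodule ℂ (EuclideanSpace ℂ (Fin k))))
    (hvC : vC ∈ tensorSubmodule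
      (eigSpan ((w : ℂ) • P₀ + ((1 - w : ℝ) : ℂ) • P₁) {μ : ℝ | |μ - 1/2| > |w - 1/2| + ε})
      (eigSpan ((w : ℂ) • Q₀ + ((1 - w : ℝ) : ℂ) • Q₁) {μ : ℝ | |μ - 1/2| ≤ |w - 1/2| + ε})) :
    w * ‖Matrix.toEuclideanLin (P₀ ⊗ₖ Q₀) v‖ ^ 2
      + (1 - w) * ‖Matrix.toEuclideanLin (P₁ ⊗ₖ Q₁) v‖ ^ 2
      ≤ max w (1 - w) + ε := by
  set c := |w - 1 / 2| + ε
  set M := (w : ℂ) • P₀ + ((1 - w : ℝ) : ℂ) • P₁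
  have hP₀ : IsStarProjection P₀ := ⟨hP₀i, hP₀h⟩
  have hP₁ : IsStarProjection P₁ := ⟨hP₁i, hP₁h⟩
  have hQ₀ : IsStarProjection Q₀ := ⟨hQ₀i, hQ₀h⟩
  have hQ₁ : IsStarProjection Q₁ := ⟨hQ₁i, hQ₁h⟩
  have hvC' : vC ∈ tensorSubmodule (eigSpan M {μ | |μ - 1 / 2| > c}) ⊤ :=
    tensorSubmodule_mono le_rfl le_top hvC
  have hnorm : ‖vB‖ ^ 2 + ‖vC‖ ^ 2 = 1 := by
    rw [← (tensorSubmodule_eigSpan_isOrtho (hP₀h.ofReal_smul_add_ofReal_smul hP₁h _ _)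
      c ⊤ ⊤).norm_add_sq hvB hvC', ← hsplit, hv, one_pow]
  have hnear : ∀ μ ∈ {μ : ℝ | |μ - 1 / 2| ≤ c}, μ ≤ max w (1 - w) + ε :=
    fun μ (hμ : |μ - 1 / 2| ≤ c) => by linarith [le_abs_self (μ - 1 / 2), abs_sub_half_add_half w]
  have hB := Matrix.weighted_norm_sq_kronecker_le_of_kronecker_one hP₀ hP₁ hQ₀ hQ₁ hw hnear
    (tensorSubmodule_eigSpan_top_le M _ hvB)
  have hC := Matrix.weighted_norm_sq_kronecker_le_of_one_kronecker hP₀ hP₁ hQ₀ hQ₁ hw hnear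
    (tensorSubmodule_top_eigSpan_le _ _ (tensorSubmodule_mono le_top le_rfl hvC))
  have hswap : M = ((1 - w : ℝ) : ℂ) • P₁ + (w : ℂ) • P₀ := add_comm _ _
  rw [hsplit, norm_sq_toEuclideanLin_kronecker_add hP₀ hP₁ (add_sub_cancel w 1) c Q₀ hvB hvC',
    norm_sq_toEuclideanLin_kronecker_add hP₁ hP₀ (sub_add_cancel 1 w) c Q₁ (hswap ▸ hvB)
      (hswap ▸ hvC')]
  linear_combination hB + hC + (max w (1 - w) + ε) * hnorm

/-- **Key quantitative step for the identical challenge mode.** If the unit vector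
`v = v_B + v_C` with `v_B ∈ S_near ⊗ ℂ^k` and `v_C ∈ S_far ⊗ T_near`, where `S_near`/`S_far`
(resp. `T_near`) are sums of eigenspaces of `M = w P₀ + (1-w) P₁` (resp. `N = w Q₀ + (1-w) Q₁`)
with eigenvalues at distance `≤` (resp. `>`) `|w - 1/2| + ε` from `1/2`, then
`w ‖(P₀ ⊗ Q₀) v‖² + (1-w) ‖(P₁ ⊗ Q₁) v‖² ≤ max w (1-w) + ε`. -/
theorem identical_challenge_bound
    (m k : ℕ) (hm : 1 ≤ m) (hk : 1 ≤ k)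
    (P₀ P₁ : Matrix (Fin m) (Fin m) ℂ) (Q₀ Q₁ : Matrix (Fin k) (Fin k) ℂ)
    (hP₀h : P₀.IsHermitian) (hP₀i : P₀ * P₀ = P₀)
    (hP₁h : P₁.IsHermitian) (hP₁i : P₁ * P₁ = P₁)
    (hQ₀h : Q₀.IsHermitian) (hQ₀i : Q₀ * Q₀ = Q₀)
    (hQ₁h : Q₁.IsHermitian) (hQ₁i : Q₁ * Q₁ = Q₁)
    (w ε : ℝ) (hw : w ∈ Set.Icc (0 : ℝ) 1) (hε : 0 < ε)
    (v vB vC : EuclideanSpace ℂ (Fin m × Fin k))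
    (hv : ‖v‖ = 1)
    (hsplit : v = vB + vC)
    (hvB : vB ∈ tensorSubmodule
      (eigSpan ((w : ℂ) • P₀ + ((1 - w : ℝ) : ℂ) • P₁) {μ : ℝ | |μ - 1/2| ≤ |w - 1/2| + ε})
      (⊤ : Submodule ℂ (EuclideanSpace ℂ (Fin k))))
    (hvC : vC ∈ tensorSubmodule
      (eigSpan ((w : ℂ) • P₀ + ((1 - w : ℝ) : ℂ) • P₁) {μ : ℝ | |μ - 1/2| > |w - 1/2| + ε})
      (eigSpan ((w : ℂ) • Q₀ + ((1 - w : ℝ) : ℂ) • Q₁) {μ : ℝ | |μ - 1/2| ≤ |w - 1/2| + ε})) :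
    w * ‖Matrix.toEuclideanLin (P₀ ⊗ₖ Q₀) v‖ ^ 2
      + (1 - w) * ‖Matrix.toEuclideanLin (P₁ ⊗ₖ Q₁) v‖ ^ 2
      ≤ max w (1 - w) + ε :=
  identical_challenge_bound_general m k P₀ P₁ Q₀ Q₁ hP₀h hP₀i hP₁h hP₁i hQ₀h hQ₀i hQ₁h hQ₁i w ε hw v
    vB vC hv hsplit hvB hvC
end

section
/- Let A be a linear subspace of F₂ⁿ and let s, s', t, t' ∈ F₂ⁿ. Then: (a) the coset state |A_{s,s'}⟩ is a unit vector in ℂ^{F₂ⁿ}; (b) if A + s ≠ A + t or A^⊥ + s' ≠ A^⊥ + t', then ⟨|A_{s,s'}⟩, |A_{t,t'}⟩⟩ = 0; and (c) if R ⊆ F₂ⁿ is a set containing exactly one representative of each coset of A and R' ⊆ F₂ⁿ is a set containing exactly one representative of each coset of A^⊥, then the family (|A_{s,s'}⟩)_{s ∈ R, s' ∈ R'} is an orthonormal basis of ℂ^{F₂ⁿ}. -/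
open scoped Classical InnerProductSpace

/-- The vector space `F₂ⁿ`. -/
abbrev F2n (n : ℕ) := Fin n → ZMod 2

/-- The `F₂`-bilinear form `⟨x, y⟩ = Σᵢ xᵢ yᵢ` on `F₂ⁿ`. -/
def bform {n : ℕ} (x y : F2n n) : ZMod 2 := ∑ i, x i * y i

/-- The sign `(−1)^b ∈ ℂ` attached to `b ∈ F₂`. -/
def sgn (b : ZMod 2) : ℂ := (-1 : ℂ) ^ b.val

/-- The dual subspace `A^⊥ = {b | ⟨a, b⟩ = 0 for all a ∈ A}`. -/
def dualSub {n : ℕ} (A : Submodule (ZMod 2) (F2n n)) : Submodule (ZMod 2) (F2n n) where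
  carrier := {b | ∀ a ∈ A, bform a b = 0}
  add_mem' := by
    intro b c hb hc a ha
    have h : bform a (b + c) = bform a b + bform a c := by
      simp [bform, Pi.add_apply, mul_add, Finset.sum_add_distrib]
    simp only [Set.mem_setOf_eq] at hb hc ⊢
    rw [h, hb a ha, hc a ha, add_zero]
  zero_mem' := by
    intro a _
    simp [bform]
  smul_mem' := by
    intro c x hx a ha
    have h : bform a (c • x) = c * bform a x := by
      simp only [bform, Finset.mul_sum, Pi.smul_apply, smul_eq_mul]
      exact Finset.sum_congr rfl fun i _ => by ring
    simp only [Set.mem_setOf_eq] at hx ⊢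
    rw [h, hx a ha, mul_zero]

/-- The coset `A + s` of a subspace `A ≤ F₂ⁿ`. -/
def coset {n : ℕ} (A : Submodule (ZMod 2) (F2n n)) (s : F2n n) : Set (F2n n) :=
  (fun a => a + s) '' (A : Set (F2n n))

/-- The coset state `|A_{s,s'}⟩ = |A|^{−1/2} Σ_{a ∈ A} (−1)^{⟨s',a⟩} e_{a+s}`. -/
noncomputable def cosetState (n : ℕ) (A : Submodule (ZMod 2) (F2n n)) (s s' : F2n n) :
    EuclideanSpace ℂ (F2n n) :=
  ((Real.sqrt (Nat.card A) : ℂ))⁻¹ •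
    ∑ a ∈ (A : Set (F2n n)).toFinset,
      sgn (bform s' a) • EuclideanSpace.single (a + s) (1 : ℂ)

/-! The coordinates of `|A_{s,s'}⟩` are supported on the coset `A + s`, so
`⟨A_{s,s'}, A_{t,t'}⟩` vanishes unless `s + t ∈ A`. In that case the substitution `x = a + s`
turns it into `(−1)^{⟨t', s+t⟩} |A|⁻¹ Σ_{a ∈ A} (−1)^{⟨s'+t', a⟩}`, and the character sum is `|A|`
or `0` according as `s' + t' ∈ A^⊥` or not. This gives (a), (b) and the orthonormality in (c).
A family of representatives of the cosets of `A` and of `A^⊥` has `2ⁿ/|A| · 2ⁿ/|A^⊥| = 2ⁿ`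
members because `dim A^⊥ = n − dim A`, so the orthonormal family in (c) also spans. -/

lemma eq_of_sub_mem_of_existsUnique_sub_mem {R M : Type*} [Ring R] [AddCommGroup M]
    [Module R M] {A : Submodule R M} {T : Set M} (hT : ∀ x, ∃! r, r ∈ T ∧ x - r ∈ A) {s t : M}
    (hs : s ∈ T) (ht : t ∈ T) (hst : s - t ∈ A) : s = t :=
  (hT s).unique ⟨hs, by simp⟩ ⟨ht, hst⟩

lemma isComplement_of_existsUnique_sub_mem {R M : Type*} [Ring R] [AddCommGroup M]
    [Module R M] {A : Submodule R M} {T : Set M} (hT : ∀ x, ∃! r, r ∈ T ∧ x - r ∈ A) :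
    AddSubgroup.IsComplement T (A : Set M) := by
  refine AddSubgroup.isComplement_iff_existsUnique_neg_add_mem.2 fun x => ?_
  obtain ⟨r, ⟨hr, hxr⟩, huniq⟩ := hT x
  refine ⟨⟨r, hr⟩, ?_, fun r' hr' => Subtype.ext (huniq r' ⟨r'.2, ?_⟩)⟩
  · simpa [neg_add_eq_sub] using hxr
  · simpa [neg_add_eq_sub] using hr'

lemma sgn_add (a b : ZMod 2) : sgn (a + b) = sgn a * sgn b := by
  rw [sgn, sgn, sgn, ZMod.val_add, ← pow_add, ← neg_one_pow_eq_pow_mod_two]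

lemma sgn_one : sgn 1 = -1 := by simp [sgn, ZMod.val_one]

lemma sgn_eq_one_iff {b : ZMod 2} : sgn b = 1 ↔ b = 0 := by
  obtain rfl | rfl : b = 0 ∨ b = 1 := by decide +revert
  · simp [sgn]
  · norm_num [sgn_one]

lemma conj_sgn (b : ZMod 2) : (starRingEnd ℂ) (sgn b) = sgn b := by
  simp [sgn]

def sgnChar : AddChar (ZMod 2) ℂ where
  toFun := sgn
  map_zero_eq_one' := sgn_eq_one_iff.2 rfl
  map_add_eq_mul' := sgn_add

section F2n

variable {n : ℕ}

lemma F2n.add_self (x : F2n n) : x + x = 0 :=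
  funext fun i => CharTwo.add_self_eq_zero (x i)

lemma F2n.sub_eq_add (x y : F2n n) : x - y = x + y :=
  funext fun i => CharTwo.sub_eq_add (x i) (y i)

lemma F2n.eq_add_iff_eq_add {x y z : F2n n} : x = y + z ↔ y = x + z := by
  constructor <;> rintro rfl <;> simp [add_assoc, F2n.add_self]

lemma bform_comm (x y : F2n n) : bform x y = bform y x := dotProduct_comm x y

lemma bform_add_left (x y z : F2n n) : bform (x + y) z = bform x z + bform y z :=
  add_dotProduct x y z

lemma bform_add_right (x y z : F2n n) : bform x (y + z) = bform x y + bform x z :=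
  dotProduct_add x y z

variable (n) in
abbrev bformBilin : LinearMap.BilinForm (ZMod 2) (F2n n) := Matrix.toBilin' 1

lemma bformBilin_apply (x y : F2n n) : bformBilin n x y = bform x y := by
  simp [Matrix.toBilin'_apply', bform, dotProduct]

variable (A : Submodule (ZMod 2) (F2n n))

lemma dualSub_eq_orthogonal : dualSub A = (bformBilin n).orthogonal A := by
  ext y
  simp [LinearMap.BilinForm.mem_orthogonal_iff, bformBilin_apply, dualSub]

lemma card_mul_card_dualSub : Nat.card A * Nat.card (dualSub A) = 2 ^ n := by
  have hdual : Module.finrank (ZMod 2) (dualSub A) = n - Module.finrank (ZMod 2) A := by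
    rw [dualSub_eq_orthogonal, LinearMap.BilinForm.finrank_orthogonal
      (LinearMap.BilinForm.nondegenerate_toBilin'_of_det_ne_zero' 1 (by simp)),
      Module.finrank_fin_fun]
  have hle : Module.finrank (ZMod 2) A ≤ n :=
    (Submodule.finrank_le A).trans_eq (Module.finrank_fin_fun _)
  rw [Nat.card_eq_fintype_card, Nat.card_eq_fintype_card, Module.card_eq_pow_finrank (K := ZMod 2),
    Module.card_eq_pow_finrank (K := ZMod 2) (V := dualSub A), ZMod.card, ← pow_add, hdual,
    Nat.add_sub_cancel' hle]

lemma sum_sgn_bform (y : F2n n) :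
    ∑ a, (if a ∈ A then sgn (bform y a) else 0) =
      if y ∈ dualSub A then (Nat.card A : ℂ) else 0 := by
  let ψ : AddChar A ℂ :=
    sgnChar.compAddMonoidHom ((bformBilin n y).domRestrict A).toAddMonoidHom
  have hψ : ψ = 0 ↔ y ∈ dualSub A := by
    simp [AddChar.eq_zero_iff, ψ, sgnChar, bformBilin_apply, sgn_eq_one_iff, bform_comm y,
      dualSub]
  have hsum : ∑ a : A, sgn (bform y a) = ∑ a, ψ a := by
    simp [ψ, sgnChar, bformBilin_apply]
  rw [← Finset.sum_filter, Finset.sum_subtype (p := (· ∈ A)) _ (by simp), hsum, ψ.sum_eq_ite]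
  simp [hψ, Nat.card_eq_fintype_card]

lemma coset_eq_coset_iff (s t : F2n n) : coset A s = coset A t ↔ s + t ∈ A := by
  open Pointwise in
  have hcoset : ∀ u, coset A u = AddOpposite.op u +ᵥ (A.toAddSubgroup : Set (F2n n)) :=
    fun _ => rfl
  rw [hcoset, hcoset, rightAddCoset_eq_iff, ← sub_eq_add_neg, sub_mem_comm_iff, F2n.sub_eq_add]
  rfl

lemma cosetState_apply (s s' x : F2n n) :
    cosetState n A s s' x =
      (Real.sqrt (Nat.card A) : ℂ)⁻¹ * if x + s ∈ A then sgn (bform s' (x + s)) else 0 := by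
  simp [cosetState, Finset.sum_apply, Pi.single_apply, F2n.eq_add_iff_eq_add]

lemma inner_cosetState_eq_sum (s s' t t' : F2n n) :
    ⟪cosetState n A s s', cosetState n A t t'⟫_ℂ =
      (Nat.card A : ℂ)⁻¹ * ∑ a, if a ∈ A ∧ a + (s + t) ∈ A then
        sgn (bform s' a) * sgn (bform t' (a + (s + t))) else 0 := by
  have hscale : (starRingEnd ℂ) (Real.sqrt (Nat.card A) : ℂ)⁻¹ * (Real.sqrt (Nat.card A) : ℂ)⁻¹ =
      (Nat.card A : ℂ)⁻¹ := by
    rw [map_inv₀, Complex.conj_ofReal, ← mul_inv, ← Complex.ofReal_mul,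
      Real.mul_self_sqrt (Nat.cast_nonneg _), Complex.ofReal_natCast]
  simp only [PiLp.inner_apply, RCLike.inner_apply, cosetState_apply, Finset.mul_sum]
  refine Fintype.sum_equiv (Equiv.addRight s) _ _ fun x => ?_
  have hxt : x + s + (s + t) = x + t := by
    rw [add_assoc, ← add_assoc s, F2n.add_self, zero_add]
  simp only [Equiv.coe_addRight, hxt]
  rw [map_mul, ← hscale]
  by_cases hs : x + s ∈ A <;> by_cases ht : x + t ∈ A <;>
    simp only [hs, ht, ↓reduceIte, and_self, and_true, and_false, map_zero, mul_zero, zero_mul,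
      conj_sgn]
  ring

lemma inner_cosetState (s s' t t' : F2n n) :
    ⟪cosetState n A s s', cosetState n A t t'⟫_ℂ =
      if s + t ∈ A ∧ s' + t' ∈ dualSub A then sgn (bform t' (s + t)) else 0 := by
  rw [inner_cosetState_eq_sum]
  by_cases hst : s + t ∈ A
  · have hterm : ∀ a, (if a ∈ A ∧ a + (s + t) ∈ A then
        sgn (bform s' a) * sgn (bform t' (a + (s + t))) else 0) =
        (if a ∈ A then sgn (bform (s' + t') a) else 0) * sgn (bform t' (s + t)) := fun a => by
      simp only [A.add_mem_iff_left hst, and_self, bform_add_left, bform_add_right, sgn_add]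
      split_ifs <;> ring
    have hcard : (Nat.card A : ℂ) ≠ 0 := Nat.cast_ne_zero.2 Nat.card_pos.ne'
    simp only [hterm, ← Finset.sum_mul, sum_sgn_bform, hst, true_and]
    split_ifs
    · field_simp
    · simp
  · have hdisj : ∀ a, ¬(a ∈ A ∧ a + (s + t) ∈ A) := fun a ⟨ha, hast⟩ =>
      hst (by simpa [← add_assoc, F2n.add_self] using A.add_mem ha hast)
    simp [hdisj, hst]

lemma inner_cosetState_self (s s' : F2n n) :
    ⟪cosetState n A s s', cosetState n A s s'⟫_ℂ = 1 := by
  rw [inner_cosetState, F2n.add_self, F2n.add_self, if_pos ⟨A.zero_mem, (dualSub A).zero_mem⟩]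
  exact sgn_eq_one_iff.2 (dotProduct_zero s')

lemma norm_cosetState (s s' : F2n n) : ‖cosetState n A s s'‖ = 1 := by
  have h : ‖cosetState n A s s'‖ ^ 2 = 1 := by
    rw [@norm_sq_eq_re_inner ℂ, inner_cosetState_self, RCLike.one_re]
  exact (pow_eq_one_iff_of_nonneg (norm_nonneg _) two_ne_zero).1 h

variable {A} {R R' : Set (F2n n)}
  (hR : ∀ x, ∃! r, r ∈ R ∧ x - r ∈ A) (hR' : ∀ x, ∃! r, r ∈ R' ∧ x - r ∈ dualSub A)
include hR hR'

lemma orthonormal_cosetState : Orthonormal ℂ (fun p : R × R' => cosetState n A p.1 p.2) := by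
  rw [orthonormal_iff_ite]
  rintro ⟨⟨s, hs⟩, ⟨s', hs'⟩⟩ ⟨⟨t, ht⟩, ⟨t', ht'⟩⟩
  by_cases h : s + t ∈ A ∧ s' + t' ∈ dualSub A
  · obtain rfl := eq_of_sub_mem_of_existsUnique_sub_mem hR hs ht (F2n.sub_eq_add s t ▸ h.1)
    obtain rfl := eq_of_sub_mem_of_existsUnique_sub_mem hR' hs' ht' (F2n.sub_eq_add s' t' ▸ h.2)
    rw [if_pos rfl]
    exact inner_cosetState_self A s s'
  · rw [inner_cosetState, if_neg h, if_neg]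
    rintro ⟨⟩
    simp [F2n.add_self] at h

lemma card_prod_transversals : Nat.card (R × R') = 2 ^ n := by
  have hcard : Nat.card (F2n n) = 2 ^ n := by simp [Nat.card_eq_fintype_card, ZMod.card]
  have hRA : Nat.card R * Nat.card A = 2 ^ n :=
    hcard ▸ (isComplement_of_existsUnique_sub_mem hR).card_mul_card
  have hR'A : Nat.card R' * Nat.card (dualSub A) = 2 ^ n :=
    hcard ▸ (isComplement_of_existsUnique_sub_mem hR').card_mul_card
  refine Nat.eq_of_mul_eq_mul_right (pow_pos two_pos n) ?_
  calc Nat.card (R × R') * 2 ^ n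
      = (Nat.card R * Nat.card A) * (Nat.card R' * Nat.card (dualSub A)) := by
        rw [Nat.card_prod, ← card_mul_card_dualSub A]; ring
    _ = 2 ^ n * 2 ^ n := by rw [hRA, hR'A]

end F2n

/-- **Coset states form an orthonormal basis.** (a) each coset state is a unit vector;
(b) coset states attached to different pairs of cosets are orthogonal; (c) given systems of
representatives `R`, `R'` of the cosets of `A` and of `A^⊥`, the family
`(|A_{s,s'}⟩)_{s ∈ R, s' ∈ R'}` is an orthonormal basis of `ℂ^{F₂ⁿ}`. -/
theorem cosetState_orthonormal_basis (n : ℕ) (A : Submodule (ZMod 2) (F2n n)) :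
    (∀ s s' : F2n n, ‖cosetState n A s s'‖ = 1) ∧
    (∀ s s' t t' : F2n n,
      (coset A s ≠ coset A t ∨ coset (dualSub A) s' ≠ coset (dualSub A) t') →
      ⟪cosetState n A s s', cosetState n A t t'⟫_ℂ = 0) ∧
    (∀ R R' : Set (F2n n),
      (∀ x : F2n n, ∃! r, r ∈ R ∧ x - r ∈ A) →
      (∀ x : F2n n, ∃! r, r ∈ R' ∧ x - r ∈ dualSub A) →
      Orthonormal ℂ (fun p : R × R' => cosetState n A (p.1 : F2n n) (p.2 : F2n n)) ∧
      Submodule.span ℂ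
        (Set.range fun p : R × R' => cosetState n A (p.1 : F2n n) (p.2 : F2n n)) = ⊤) := by
  refine ⟨norm_cosetState A, fun s s' t t' hne => ?_, fun R R' hR hR' => ?_⟩
  · rw [inner_cosetState, if_neg]
    simp only [ne_eq, coset_eq_coset_iff] at hne
    tauto
  · have hON := orthonormal_cosetState hR hR'
    refine ⟨hON, hON.linearIndependent.span_eq_top_of_card_eq_finrank' ?_⟩
    rw [← Nat.card_eq_fintype_card, card_prod_transversals hR hR', finrank_euclideanSpace,
      Fintype.card_fun, ZMod.card, Fintype.card_fin]
end

section
/- Let 1 ≤ d ≤ n and let G be the set of all d-dimensional linear subspaces of F₂ⁿ. Then Σ_{(A, A') ∈ G × G} |A ∩ A'| = |G|² · (1 + (2^d − 1)²/(2ⁿ − 1)). In particular, when n = 2d, the expected cardinality of the intersection of two independent uniformly random d-dimensional subspaces of F₂^{2d} is 1 + (2^d − 1)/(2^d + 1) < 2. -/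
/-!
Over a field with `q` elements, counting triples `(v, A, A')` with `v ∈ A ⊓ A'` turns the sum
into `∑ v, N v ^ 2`, where `N v` is the number of `d`-dimensional subspaces containing `v`.
Clearly `N 0 = |G|`; since the linear automorphisms act transitively on nonzero vectors and
permute `G`, `N` is constant on the `q ^ n - 1` nonzero vectors, and `∑ v, N v = |G| q ^ d`
pins that constant down to `|G| (q ^ d - 1) / (q ^ n - 1)`.
-/

open Finset

theorem LinearEquiv.exists_apply_eq {K V : Type*} [DivisionRing K] [AddCommGroup V] [Module K V]
    {v w : V} (hv : v ≠ 0) (hw : w ≠ 0) : ∃ g : V ≃ₗ[K] V, g v = w := by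
  obtain ⟨g, hg⟩ := Submodule.exists_linearEquiv_restrict_eq
    ((toSpanNonzeroSingleton K V v hv).symm ≪≫ₗ toSpanNonzeroSingleton K V w hw)
  refine ⟨g, ?_⟩
  have := hg (toSpanNonzeroSingleton K V v hv 1)
  rwa [trans_apply, symm_apply_apply, toSpanNonzeroSingleton_one, toSpanNonzeroSingleton_one,
    eq_comm] at this

open scoped Classical in
theorem Submodule.sum_sum_card_inf_eq_sum_sq {R M : Type*} [Semiring R] [AddCommMonoid M]
    [Module R M] [Fintype M] (G : Finset (Submodule R M)) :
    ∑ A ∈ G, ∑ A' ∈ G, Nat.card ↥(A ⊓ A') = ∑ v : M, #{A ∈ G | v ∈ A} ^ 2 := by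
  have := sum_card_bipartiteAbove_eq_sum_card_bipartiteBelow (s := G ×ˢ G) (t := univ)
    (fun p v => v ∈ p.1 ∧ v ∈ p.2)
  simp only [bipartiteAbove, bipartiteBelow, sum_product] at this
  simp only [Nat.card_eq_fintype_card, Fintype.card_subtype, Submodule.mem_inf, this, sq,
    ← card_product, ← filter_product]

open scoped Classical in
theorem Submodule.sum_card_filter_mem_eq_sum_card {R M : Type*} [Semiring R] [AddCommMonoid M]
    [Module R M] [Fintype M] (G : Finset (Submodule R M)) :
    ∑ v : M, #{A ∈ G | v ∈ A} = ∑ A ∈ G, Nat.card A := by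
  have := sum_card_bipartiteAbove_eq_sum_card_bipartiteBelow (s := univ) (t := G)
    (fun v (A : Submodule R M) => v ∈ A)
  simpa only [bipartiteAbove, bipartiteBelow, Nat.card_eq_fintype_card, Fintype.card_subtype]

open scoped Classical in
theorem Submodule.card_filter_mem_eq_of_ne_zero {K V : Type*} [DivisionRing K] [AddCommGroup V]
    [Module K V] {G : Finset (Submodule K V)}
    (hG : ∀ e : V ≃ₗ[K] V, ∀ A ∈ G, A.map (e : V →ₗ[K] V) ∈ G) {v w : V} (hv : v ≠ 0)
    (hw : w ≠ 0) : #{A ∈ G | v ∈ A} = #{A ∈ G | w ∈ A} := by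
  obtain ⟨e, rfl⟩ := LinearEquiv.exists_apply_eq (K := K) hv hw
  refine card_nbij' (fun A => A.map (e : V →ₗ[K] V)) (fun A => A.map (e.symm : V →ₗ[K] V))
    ?_ ?_ ?_ ?_
  · intro A hA
    simp only [coe_filter] at hA ⊢
    exact ⟨hG e A hA.1, mem_map_of_mem hA.2⟩
  · intro A hA
    simp only [coe_filter] at hA ⊢
    exact ⟨hG e.symm A hA.1, by simpa using mem_map_of_mem (f := (e.symm : V →ₗ[K] V)) hA.2⟩
  · intro A _
    simp [← map_comp]
  · intro A _
    simp [← map_comp]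

theorem Finset.sum_sq_eq_sq_sum_div_card {ι K : Type*} [Semifield K] [CharZero K] {s : Finset ι}
    {f : ι → K} (hf : ∀ i ∈ s, ∀ j ∈ s, f i = f j) :
    ∑ i ∈ s, f i ^ 2 = (∑ i ∈ s, f i) ^ 2 / #s := by
  rcases s.eq_empty_or_nonempty with rfl | ⟨i, hi⟩
  · simp
  rw [sum_congr rfl fun j hj => hf j hj i hi, sum_congr rfl fun j hj => by rw [hf j hj i hi],
    sum_const, sum_const, nsmul_eq_mul, nsmul_eq_mul]
  have : (#s : K) ≠ 0 := by simpa using ne_empty_of_mem hi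
  field_simp

open scoped Classical in
theorem Submodule.sum_sum_card_inf_of_forall_mem_iff_finrank_eq {F V : Type*} [Field F]
    [Fintype F] [AddCommGroup V] [Module F V] [Fintype V] {d : ℕ} (G : Finset (Submodule F V))
    (hG : ∀ A : Submodule F V, A ∈ G ↔ Module.finrank F A = d) :
    ∑ A ∈ G, ∑ A' ∈ G, (Nat.card ↥(A ⊓ A') : ℝ)
      = #G ^ 2 * (1 + ((Fintype.card F : ℝ) ^ d - 1) ^ 2 / (Fintype.card V - 1)) := by
  have hinv : ∀ e : V ≃ₗ[F] V, ∀ A ∈ G, A.map (e : V →ₗ[F] V) ∈ G := fun e A hA =>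
    (hG _).2 ((e.finrank_map_eq A).trans ((hG A).1 hA))
  have hcard : ∀ A ∈ G, Nat.card A = Fintype.card F ^ d := fun A hA => by
    rw [Nat.card_eq_fintype_card, Module.card_eq_pow_finrank (K := F), (hG A).1 hA]
  have hzero : #{A ∈ G | (0 : V) ∈ A} = #G :=
    congrArg card (filter_true_of_mem fun A _ => A.zero_mem)
  have hnonzero : ∑ v ∈ univ.erase 0, (#{A ∈ G | v ∈ A} : ℝ)
      = #G * ((Fintype.card F : ℝ) ^ d - 1) := by
    have := sum_card_filter_mem_eq_sum_card G
    rw [← add_sum_erase _ _ (mem_univ 0), hzero, sum_congr rfl hcard, sum_const,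
      smul_eq_mul] at this
    have := congrArg (Nat.cast : ℕ → ℝ) this
    push_cast at this
    linarith
  have hconst : ∀ v ∈ univ.erase (0 : V), ∀ w ∈ univ.erase 0,
      (#{A ∈ G | v ∈ A} : ℝ) = #{A ∈ G | w ∈ A} := fun v hv w hw => by
    rw [card_filter_mem_eq_of_ne_zero hinv (ne_of_mem_erase hv) (ne_of_mem_erase hw)]
  have hcardV : (#(univ.erase (0 : V)) : ℝ) = Fintype.card V - 1 := by
    rw [card_erase_of_mem (mem_univ 0), card_univ, Nat.cast_sub Fintype.card_pos, Nat.cast_one]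
  have hsq := congrArg (Nat.cast : ℕ → ℝ) (sum_sum_card_inf_eq_sum_sq G)
  push_cast at hsq
  rw [hsq, ← add_sum_erase _ _ (mem_univ 0), hzero, sum_sq_eq_sq_sum_div_card hconst, hnonzero,
    hcardV]
  ring

theorem sum_card_inter_subspaces_general (n d : ℕ)
    (G : Finset (Submodule (ZMod 2) (Fin n → ZMod 2)))
    (hG : ∀ A : Submodule (ZMod 2) (Fin n → ZMod 2),
      A ∈ G ↔ Module.finrank (ZMod 2) A = d) :
    (∑ A ∈ G, ∑ A' ∈ G, (Nat.card ↥(A ⊓ A') : ℝ))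
        = (G.card : ℝ) ^ 2 * (1 + ((2 : ℝ) ^ d - 1) ^ 2 / ((2 : ℝ) ^ n - 1)) ∧
    (n = 2 * d →
      (1 : ℝ) + ((2 : ℝ) ^ d - 1) / ((2 : ℝ) ^ d + 1) < 2) := by
  refine ⟨?_, fun _ => ?_⟩
  · rw [Submodule.sum_sum_card_inf_of_forall_mem_iff_finrank_eq G hG]
    simp
  · have : ((2 : ℝ) ^ d - 1) / (2 ^ d + 1) < 1 := by
      rw [div_lt_one (by positivity)]
      linarith
    linarith

/-- **Expected intersection size of two random `d`-dimensional subspaces of `F₂ⁿ`.** If `G`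
is the (finite) set of all `d`-dimensional subspaces of `F₂ⁿ`, then
`Σ_{(A,A') ∈ G×G} |A ∩ A'| = |G|² · (1 + (2^d − 1)²/(2ⁿ − 1))`; in particular, for `n = 2d`
the expected intersection size of two independent uniform `d`-dimensional subspaces is
`1 + (2^d − 1)/(2^d + 1) < 2`. -/
theorem sum_card_inter_subspaces (n d : ℕ) (h1 : 1 ≤ d) (hdn : d ≤ n)
    (G : Finset (Submodule (ZMod 2) (Fin n → ZMod 2)))
    (hG : ∀ A : Submodule (ZMod 2) (Fin n → ZMod 2),
      A ∈ G ↔ Module.finrank (ZMod 2) A = d) :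
    (∑ A ∈ G, ∑ A' ∈ G, (Nat.card ↥(A ⊓ A') : ℝ))
        = (G.card : ℝ) ^ 2 * (1 + ((2 : ℝ) ^ d - 1) ^ 2 / ((2 : ℝ) ^ n - 1)) ∧
    (n = 2 * d →
      (1 : ℝ) + ((2 : ℝ) ^ d - 1) / ((2 : ℝ) ^ d + 1) < 2) :=
  sum_card_inter_subspaces_general n d G hG
end
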